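/- arXiv:2406.03620 — 6 statements merged into one kernel-verified Lean document; each statement's English description precedes it below -/
import Mathlib

section
/- Let (Ω, 𝒜, m) be a σ-finite measure space and let f, g : Ω → [0,∞) be measurable functions such that μ := f·dm and ν := g·dm are probability measures on Ω. Let 0 < ε ≤ 1/10 and 0 ≤ δ ≤ 1. Suppose that for every measurable set S ⊆ Ω, μ(S) ≤ e^{ε/2}·ν(S) + δ and ν(S) ≤ e^{ε/2}·μ(S) + δ. Then μ({x : f(x) > e^{ε}·g(x) or g(x) > e^{ε}·f(x)}) ≤ 6δ/ε, and likewise ν({x : f(x) > e^{ε}·g(x) or g(x) > e^{ε}·f(x)}) ≤ 6δ/ε. -/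
open MeasureTheory ENNReal

lemma aux_div_ratio {Ω : Type*} [MeasurableSpace Ω] (m : Measure Ω)
    (f g : Ω → ℝ≥0∞) (hf : Measurable f) (hg : Measurable g)
    (hν : IsProbabilityMeasure (m.withDensity g))
    (ε δ : ℝ) (hε : 0 < ε) (hε' : ε ≤ 1 / 10) (hδ : 0 ≤ δ)
    (hind : m.withDensity f {x | ENNReal.ofReal (Real.exp ε) * g x < f x} ≤
          ENNReal.ofReal (Real.exp (ε / 2)) *
            m.withDensity g {x | ENNReal.ofReal (Real.exp ε) * g x < f x} +
          ENNReal.ofReal δ) :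
    m.withDensity g {x | ENNReal.ofReal (Real.exp ε) * g x < f x} ≤
        ENNReal.ofReal (2 * δ / ε) ∧
      m.withDensity f {x | ENNReal.ofReal (Real.exp ε) * g x < f x} ≤
        ENNReal.ofReal (4 * δ / ε) := by
  set S : Set Ω := {x | ENNReal.ofReal (Real.exp ε) * g x < f x} with hSdef
  have hS : MeasurableSet S := measurableSet_lt (hg.const_mul _) hf
  -- key : e^ε * ν S ≤ μ S
  have key : ENNReal.ofReal (Real.exp ε) * m.withDensity g S ≤ m.withDensity f S := by
    rw [withDensity_apply _ hS, withDensity_apply _ hS, ← lintegral_const_mul _ hg]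
    exact setLIntegral_mono hf (fun x hx => le_of_lt hx)
  have hνS_fin : m.withDensity g S ≠ ⊤ := measure_ne_top _ _
  set a : ℝ := (m.withDensity g S).toReal with ha
  have ha0 : 0 ≤ a := ENNReal.toReal_nonneg
  have hνS : m.withDensity g S = ENNReal.ofReal a := (ENNReal.ofReal_toReal hνS_fin).symm
  -- get real inequality e^ε * a ≤ e^{ε/2} * a + δ
  have hreal : Real.exp ε * a ≤ Real.exp (ε / 2) * a + δ := by
    have h1 : ENNReal.ofReal (Real.exp ε * a) ≤ ENNReal.ofReal (Real.exp (ε / 2) * a + δ) := by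
      rw [ENNReal.ofReal_mul (Real.exp_pos _).le, ENNReal.ofReal_add
        (mul_nonneg (Real.exp_pos _).le ha0) hδ, ENNReal.ofReal_mul (Real.exp_pos _).le,
        ← hνS]
      exact le_trans key hind
    exact (ENNReal.ofReal_le_ofReal_iff
      (by positivity)).mp h1
  have hE1 : ε / 2 + 1 ≤ Real.exp (ε / 2) := Real.add_one_le_exp _
  have hE2 : Real.exp (ε / 2) ≤ 20 / 19 := by
    have h2 : 1 - ε / 2 ≤ Real.exp (-(ε / 2)) := by
      linarith [Real.add_one_le_exp (-(ε / 2))]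
    have h3 : Real.exp (ε / 2) * Real.exp (-(ε / 2)) = 1 := by
      rw [← Real.exp_add]; simp
    nlinarith [Real.exp_pos (ε / 2)]
  have hexpε : Real.exp ε = Real.exp (ε / 2) * Real.exp (ε / 2) := by
    rw [← Real.exp_add]; ring_nf
  -- a ≤ 2δ/ε
  have hE0 : (1:ℝ) ≤ Real.exp (ε / 2) := by linarith
  have hA : ε * a ≤ 2 * δ := by
    nlinarith [mul_le_mul_of_nonneg_right hE1 ha0,
      mul_nonneg (mul_nonneg (sub_nonneg.mpr hE0) ha0) (sub_nonneg.mpr hE0)]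
  have haux : a ≤ 2 * δ / ε := by rw [le_div_iff₀ hε]; linarith
  constructor
  · rw [hνS]; exact ENNReal.ofReal_le_ofReal haux
  · refine le_trans hind ?_
    rw [hνS, ← ENNReal.ofReal_mul (Real.exp_pos _).le,
      ← ENNReal.ofReal_add (mul_nonneg (Real.exp_pos _).le ha0) hδ]
    apply ENNReal.ofReal_le_ofReal
    rw [le_div_iff₀ hε]
    nlinarith [mul_le_mul_of_nonneg_left hA (Real.exp_pos (ε / 2)).le,
      mul_le_mul_of_nonneg_right hE2 (by linarith : (0:ℝ) ≤ 2 * δ),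
      mul_le_mul_of_nonneg_left hε' hδ]

/-- From approximate max-divergence to a pointwise density-ratio bound: if the
probability measures `μ = f·dm` and `ν = g·dm` are `(ε/2, δ)`-indistinguishable,
then the set where the density ratio `f/g` leaves `[e^{-ε}, e^{ε}]` has measure at
most `6δ/ε` under both `μ` and `ν`. -/
theorem divergence_to_ratio {Ω : Type*} [MeasurableSpace Ω] (m : Measure Ω)
    [SigmaFinite m] (f g : Ω → ℝ≥0∞) (hf : Measurable f) (hg : Measurable g)
    (hf_fin : ∀ x, f x ≠ ⊤) (hg_fin : ∀ x, g x ≠ ⊤)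
    (hμ : IsProbabilityMeasure (m.withDensity f))
    (hν : IsProbabilityMeasure (m.withDensity g))
    (ε δ : ℝ) (hε : 0 < ε) (hε' : ε ≤ 1 / 10) (hδ : 0 ≤ δ) (hδ' : δ ≤ 1)
    (hind : ∀ S : Set Ω, MeasurableSet S →
      m.withDensity f S ≤
          ENNReal.ofReal (Real.exp (ε / 2)) * m.withDensity g S + ENNReal.ofReal δ ∧
        m.withDensity g S ≤
          ENNReal.ofReal (Real.exp (ε / 2)) * m.withDensity f S + ENNReal.ofReal δ) :
    m.withDensity f
        {x | ENNReal.ofReal (Real.exp ε) * g x < f x ∨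
          ENNReal.ofReal (Real.exp ε) * f x < g x} ≤ ENNReal.ofReal (6 * δ / ε) ∧
      m.withDensity g
        {x | ENNReal.ofReal (Real.exp ε) * g x < f x ∨
          ENNReal.ofReal (Real.exp ε) * f x < g x} ≤ ENNReal.ofReal (6 * δ / ε) := by
  set S : Set Ω := {x | ENNReal.ofReal (Real.exp ε) * g x < f x} with hSdef
  set T : Set Ω := {x | ENNReal.ofReal (Real.exp ε) * f x < g x} with hTdef
  have hS : MeasurableSet S := measurableSet_lt (hg.const_mul _) hf
  have hT : MeasurableSet T := measurableSet_lt (hf.const_mul _) hg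
  have h1 := aux_div_ratio m f g hf hg hν ε δ hε hε' hδ (hind S hS).1
  have h2 := aux_div_ratio m g f hg hf hμ ε δ hε hε' hδ (hind T hT).2
  have hset : {x | ENNReal.ofReal (Real.exp ε) * g x < f x ∨
      ENNReal.ofReal (Real.exp ε) * f x < g x} = S ∪ T := rfl
  rw [hset]
  have hsum : ENNReal.ofReal (4 * δ / ε) + ENNReal.ofReal (2 * δ / ε)
      = ENNReal.ofReal (6 * δ / ε) := by
    rw [← ENNReal.ofReal_add (by positivity) (by positivity)]
    congr 1; ring
  constructor
  · calc m.withDensity f (S ∪ T) ≤ m.withDensity f S + m.withDensity f T :=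
        measure_union_le S T
      _ ≤ ENNReal.ofReal (4 * δ / ε) + ENNReal.ofReal (2 * δ / ε) :=
        add_le_add h1.2 h2.1
      _ = ENNReal.ofReal (6 * δ / ε) := hsum
  · calc m.withDensity g (S ∪ T) ≤ m.withDensity g S + m.withDensity g T :=
        measure_union_le S T
      _ ≤ ENNReal.ofReal (2 * δ / ε) + ENNReal.ofReal (4 * δ / ε) :=
        add_le_add h1.1 h2.2
      _ = ENNReal.ofReal (6 * δ / ε) := by rw [add_comm]; exact hsum
end

section
/- Let X be a measurable space, L a type of losses, and func : L → X → (0,∞) a family of measurable positive functions. Let 0 < η ≤ 1/10 and 0 ≤ δ₀ ≤ 1. Assume that for every nonzero finite measure ρ on X and every ℓ ∈ L, the measure ρ_ℓ := ρ weighted by the density func(ℓ) is a nonzero finite measure, and the normalized probability measures ρ̄ and ρ̄_ℓ are (η, δ₀)-indistinguishable. Given a sequence (ℓ_1,…,ℓ_T) ∈ L^T and a nonzero finite measure μ_0 on X, define μ_t := μ_0 weighted by the density ∏_{i=1}^{t−1} func(ℓ_i), with normalized probability measure μ̄_t. Then for any two sequences (ℓ_1,…,ℓ_T) and (ℓ'_1,…,ℓ'_T)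 in L^T differing in exactly one index, and every t ∈ {1,…,T}, the corresponding normalized measures μ̄_t and μ̄'_t are (2η, 4δ₀)-indistinguishable. -/
/-!
If the two loss sequences differ only at index `j`, then for `t ≤ j` the two measures coincide,
while for `t > j` both are one multiplicative update (by `func (ℓs j)` and `func (ℓs' j)`)
of the same measure `ν`, the update by the common losses. By hypothesis each normalized
update is `(η, δ₀)`-close to `ν̄`, and composing the two closeness bounds through `ν̄` costs
`(2η, e^η δ₀ + δ₀)`, which is at most `(2η, 4δ₀)` since `e^η ≤ 3`.
-/

open MeasureTheory ENNReal

namespace MeasureTheory.Measure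

variable {X : Type*} [MeasurableSpace X]

noncomputable def normalize (μ : Measure X) : Measure X := (μ Set.univ)⁻¹ • μ

def Indistinguishable (ε δ : ℝ) (μ ν : Measure X) : Prop :=
  ∀ S : Set X, MeasurableSet S →
    μ S ≤ ENNReal.ofReal (Real.exp ε) * ν S + ENNReal.ofReal δ ∧
      ν S ≤ ENNReal.ofReal (Real.exp ε) * μ S + ENNReal.ofReal δ

namespace Indistinguishable

variable {ε δ : ℝ} {μ ν ρ : Measure X}

theorem symm (h : Indistinguishable ε δ μ ν) : Indistinguishable ε δ ν μ :=
  fun S hS => (h S hS).symm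

theorem refl (hε : 0 ≤ ε) (δ : ℝ) (μ : Measure X) : Indistinguishable ε δ μ μ := by
  have hle : ∀ m : ℝ≥0∞, m ≤ ENNReal.ofReal (Real.exp ε) * m + ENNReal.ofReal δ := fun m =>
    calc m = 1 * m := (one_mul m).symm
      _ ≤ ENNReal.ofReal (Real.exp ε) * m := by
        gcongr; exact ENNReal.one_le_ofReal.mpr (Real.one_le_exp hε)
      _ ≤ _ := le_self_add
  exact fun S _ => ⟨hle _, hle _⟩

theorem mono {ε' δ' : ℝ} (h : Indistinguishable ε δ μ ν) (hε : ε ≤ ε') (hδ : δ ≤ δ') :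
    Indistinguishable ε' δ' μ ν := by
  have hexp : ENNReal.ofReal (Real.exp ε) ≤ ENNReal.ofReal (Real.exp ε') :=
    ENNReal.ofReal_le_ofReal (Real.exp_le_exp.mpr hε)
  have hofReal : ENNReal.ofReal δ ≤ ENNReal.ofReal δ' := ENNReal.ofReal_le_ofReal hδ
  intro S hS
  obtain ⟨h₁, h₂⟩ := h S hS
  exact ⟨h₁.trans (by gcongr), h₂.trans (by gcongr)⟩

theorem trans (hδ : 0 ≤ δ) (hμν : Indistinguishable ε δ μ ν) (hνρ : Indistinguishable ε δ ν ρ) :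
    Indistinguishable (2 * ε) (Real.exp ε * δ + δ) μ ρ := by
  have hexp : ENNReal.ofReal (Real.exp ε) * ENNReal.ofReal (Real.exp ε) =
      ENNReal.ofReal (Real.exp (2 * ε)) := by
    rw [← ENNReal.ofReal_mul (Real.exp_nonneg ε), ← Real.exp_add, two_mul]
  have hδ' : ENNReal.ofReal (Real.exp ε) * ENNReal.ofReal δ + ENNReal.ofReal δ =
      ENNReal.ofReal (Real.exp ε * δ + δ) := by
    rw [← ENNReal.ofReal_mul (Real.exp_nonneg ε),
      ← ENNReal.ofReal_add (mul_nonneg (Real.exp_nonneg ε) hδ) hδ]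
  have compose : ∀ a b c : ℝ≥0∞,
      a ≤ ENNReal.ofReal (Real.exp ε) * b + ENNReal.ofReal δ →
      b ≤ ENNReal.ofReal (Real.exp ε) * c + ENNReal.ofReal δ →
      a ≤ ENNReal.ofReal (Real.exp (2 * ε)) * c + ENNReal.ofReal (Real.exp ε * δ + δ) := by
    intro a b c hab hbc
    calc a ≤ ENNReal.ofReal (Real.exp ε) * (ENNReal.ofReal (Real.exp ε) * c + ENNReal.ofReal δ)
          + ENNReal.ofReal δ := hab.trans (by gcongr)
      _ = _ := by rw [← hexp, ← hδ']; ring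
  intro S hS
  exact ⟨compose _ _ _ (hμν S hS).1 (hνρ S hS).1, compose _ _ _ (hνρ S hS).2 (hμν S hS).2⟩

end Indistinguishable

end MeasureTheory.Measure

open MeasureTheory.Measure

section WithDensity

variable {X ι : Type*} [MeasurableSpace X]

theorem isFiniteMeasure_withDensity_prod_and_ne_zero (f : ι → X → ℝ≥0∞)
    (hf : ∀ i, Measurable (f i))
    (hstep : ∀ ρ : Measure X, IsFiniteMeasure ρ → ρ ≠ 0 → ∀ i,
      IsFiniteMeasure (ρ.withDensity (f i)) ∧ ρ.withDensity (f i) ≠ 0)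
    (μ : Measure X) [IsFiniteMeasure μ] (hμ : μ ≠ 0) (s : Finset ι) :
    IsFiniteMeasure (μ.withDensity fun x => ∏ i ∈ s, f i x) ∧
      μ.withDensity (fun x => ∏ i ∈ s, f i x) ≠ 0 := by
  classical
  induction s using Finset.induction_on with
  | empty => simpa [withDensity_one] using ⟨‹IsFiniteMeasure μ›, hμ⟩
  | insert a s ha ih =>
    have hprod : (fun x => ∏ i ∈ insert a s, f i x) = (fun x => ∏ i ∈ s, f i x) * f a := by
      funext x
      simp only [Finset.prod_insert ha, Pi.mul_apply, mul_comm]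
    rw [hprod, withDensity_mul _ (Finset.measurable_prod _ fun i _ => hf i) (hf a)]
    exact hstep _ ih.1 ih.2 a

theorem withDensity_prod_eq_withDensity_prod_erase [DecidableEq ι] (f : ι → X → ℝ≥0∞)
    (hf : ∀ i, Measurable (f i)) (μ : Measure X) {s : Finset ι} {j : ι} (hj : j ∈ s) :
    μ.withDensity (fun x => ∏ i ∈ s, f i x) =
      (μ.withDensity fun x => ∏ i ∈ s.erase j, f i x).withDensity (f j) := by
  rw [← withDensity_mul _ (Finset.measurable_prod _ fun i _ => hf i) (hf j)]
  congr 1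
  funext x
  exact (Finset.prod_erase_mul _ _ hj).symm

end WithDensity

theorem Finset.exists_eqOn_erase_of_card_filter_ne_eq_one {ι α : Type*} [DecidableEq α]
    {s : Finset ι} {f g : ι → α} (h : (s.filter fun i => f i ≠ g i).card = 1) :
    ∃ j, ∀ i ∈ s, i ≠ j → f i = g i := by
  obtain ⟨j, hj⟩ := Finset.card_eq_one.mp h
  refine ⟨j, fun i hi hij => ?_⟩
  by_contra hne
  have hmem : i ∈ s.filter fun i => f i ≠ g i := Finset.mem_filter.mpr ⟨hi, hne⟩
  rw [hj, Finset.mem_singleton] at hmem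
  exact hij hmem
theorem multiplicative_update_privacy_general {X L : Type*} [MeasurableSpace X]
    [DecidableEq L] (func : L → X → ℝ≥0∞)
    (hmeas : ∀ ℓ : L, Measurable (func ℓ))
    (η δ₀ : ℝ) (hη : 0 < η) (hη' : η ≤ 1 / 10) (hδ₀ : 0 ≤ δ₀)
    (hstep : ∀ ρ : Measure X, IsFiniteMeasure ρ → ρ ≠ 0 → ∀ ℓ : L,
      IsFiniteMeasure (ρ.withDensity (func ℓ)) ∧ ρ.withDensity (func ℓ) ≠ 0 ∧
        ∀ S : Set X, MeasurableSet S →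
          ((ρ Set.univ)⁻¹ • ρ) S ≤
              ENNReal.ofReal (Real.exp η) *
                ((ρ.withDensity (func ℓ) Set.univ)⁻¹ • ρ.withDensity (func ℓ)) S +
                ENNReal.ofReal δ₀ ∧
            ((ρ.withDensity (func ℓ) Set.univ)⁻¹ • ρ.withDensity (func ℓ)) S ≤
              ENNReal.ofReal (Real.exp η) * ((ρ Set.univ)⁻¹ • ρ) S +
                ENNReal.ofReal δ₀)
    (T : ℕ) (ℓs ℓs' : ℕ → L)
    (hdiff : ((Finset.Icc 1 T).filter fun i => ℓs i ≠ ℓs' i).card = 1)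
    (μ₀ : Measure X) (hμ₀fin : IsFiniteMeasure μ₀) (hμ₀ne : μ₀ ≠ 0)
    (t : ℕ) (ht' : t ≤ T) :
    let μt := μ₀.withDensity fun x => ∏ i ∈ Finset.Icc 1 (t - 1), func (ℓs i) x
    let μt' := μ₀.withDensity fun x => ∏ i ∈ Finset.Icc 1 (t - 1), func (ℓs' i) x
    ∀ S : Set X, MeasurableSet S →
      ((μt Set.univ)⁻¹ • μt) S ≤
          ENNReal.ofReal (Real.exp (2 * η)) * ((μt' Set.univ)⁻¹ • μt') S +
            ENNReal.ofReal (4 * δ₀) ∧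
        ((μt' Set.univ)⁻¹ • μt') S ≤
          ENNReal.ofReal (Real.exp (2 * η)) * ((μt Set.univ)⁻¹ • μt) S +
            ENNReal.ofReal (4 * δ₀) := by
  intro μt μt'
  show Indistinguishable (2 * η) (4 * δ₀) μt.normalize μt'.normalize
  set s := Finset.Icc 1 (t - 1)
  obtain ⟨j, hj⟩ := Finset.exists_eqOn_erase_of_card_filter_ne_eq_one hdiff
  have hagree : ∀ i ∈ s, i ≠ j → ℓs i = ℓs' i := fun i hi =>
    hj i (Finset.Icc_subset_Icc le_rfl (by omega) hi)
  by_cases hjs : j ∈ s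
  · set ν := μ₀.withDensity fun x => ∏ i ∈ s.erase j, func (ℓs i) x
    obtain ⟨hνfin, hνne⟩ := isFiniteMeasure_withDensity_prod_and_ne_zero (func ∘ ℓs)
      (fun i => hmeas _) (fun ρ hρ hρ0 i => (hstep ρ hρ hρ0 (ℓs i)).imp_right And.left) μ₀
      hμ₀ne (s.erase j)
    have hμt : μt = ν.withDensity (func (ℓs j)) :=
      withDensity_prod_eq_withDensity_prod_erase (func ∘ ℓs) (fun i => hmeas _) μ₀ hjs
    have hμt' : μt' = ν.withDensity (func (ℓs' j)) := by
      refine (withDensity_prod_eq_withDensity_prod_erase (func ∘ ℓs') (fun i => hmeas _) μ₀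
        hjs).trans ?_
      congr 2
      funext x
      exact Finset.prod_congr rfl fun i hi => congrArg (func · x)
        (hagree i (Finset.mem_of_mem_erase hi) (Finset.ne_of_mem_erase hi)).symm
    have hupdate : ∀ ℓ, Indistinguishable η δ₀ ν.normalize (ν.withDensity (func ℓ)).normalize :=
      fun ℓ => (hstep ν hνfin hνne ℓ).2.2
    have hclose : Indistinguishable (2 * η) (Real.exp η * δ₀ + δ₀) μt.normalize μt'.normalize := by
      rw [hμt, hμt']
      exact (hupdate (ℓs j)).symm.trans hδ₀ (hupdate (ℓs' j))
    have hexp : Real.exp η ≤ 3 := by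
      linarith [Real.exp_one_lt_d9, Real.exp_le_exp.mpr (show η ≤ 1 by linarith)]
    exact hclose.mono le_rfl (by nlinarith)
  · have heq : μt = μt' := congrArg μ₀.withDensity <| funext fun x =>
      Finset.prod_congr rfl fun i hi => congrArg (func · x) (hagree i hi fun hij => hjs (hij ▸ hi))
    rw [heq]
    exact Indistinguishable.refl (by positivity) _ _

/-- Privacy of sampling from multiplicatively updated measures: if one
multiplicative update by any `func ℓ` changes a normalized nonzero finite measure
by at most `(η, δ₀)` in approximate max divergence, then for two loss sequences
differing in exactly one index in `{1, …, T}`, the normalized measures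
`μ̄_t` (with density `∏_{i=1}^{t-1} func (ℓ i)` against `μ₀`) and `μ̄'_t` are
`(2η, 4δ₀)`-indistinguishable for every `t ∈ {1, …, T}`. -/
theorem multiplicative_update_privacy {X L : Type*} [MeasurableSpace X]
    [DecidableEq L] (func : L → X → ℝ≥0∞)
    (hmeas : ∀ ℓ : L, Measurable (func ℓ))
    (hpos : ∀ (ℓ : L) (x : X), 0 < func ℓ x)
    (hfin : ∀ (ℓ : L) (x : X), func ℓ x < ⊤)
    (η δ₀ : ℝ) (hη : 0 < η) (hη' : η ≤ 1 / 10) (hδ₀ : 0 ≤ δ₀) (hδ₀' : δ₀ ≤ 1)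
    (hstep : ∀ ρ : Measure X, IsFiniteMeasure ρ → ρ ≠ 0 → ∀ ℓ : L,
      IsFiniteMeasure (ρ.withDensity (func ℓ)) ∧ ρ.withDensity (func ℓ) ≠ 0 ∧
        ∀ S : Set X, MeasurableSet S →
          ((ρ Set.univ)⁻¹ • ρ) S ≤
              ENNReal.ofReal (Real.exp η) *
                ((ρ.withDensity (func ℓ) Set.univ)⁻¹ • ρ.withDensity (func ℓ)) S +
                ENNReal.ofReal δ₀ ∧
            ((ρ.withDensity (func ℓ) Set.univ)⁻¹ • ρ.withDensity (func ℓ)) S ≤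
              ENNReal.ofReal (Real.exp η) * ((ρ Set.univ)⁻¹ • ρ) S +
                ENNReal.ofReal δ₀)
    (T : ℕ) (hT : 1 ≤ T) (ℓs ℓs' : ℕ → L)
    (hdiff : ((Finset.Icc 1 T).filter fun i => ℓs i ≠ ℓs' i).card = 1)
    (μ₀ : Measure X) (hμ₀fin : IsFiniteMeasure μ₀) (hμ₀ne : μ₀ ≠ 0)
    (t : ℕ) (ht : 1 ≤ t) (ht' : t ≤ T) :
    let μt := μ₀.withDensity fun x => ∏ i ∈ Finset.Icc 1 (t - 1), func (ℓs i) x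
    let μt' := μ₀.withDensity fun x => ∏ i ∈ Finset.Icc 1 (t - 1), func (ℓs' i) x
    ∀ S : Set X, MeasurableSet S →
      ((μt Set.univ)⁻¹ • μt) S ≤
          ENNReal.ofReal (Real.exp (2 * η)) * ((μt' Set.univ)⁻¹ • μt') S +
            ENNReal.ofReal (4 * δ₀) ∧
        ((μt' Set.univ)⁻¹ • μt') S ≤
          ENNReal.ofReal (Real.exp (2 * η)) * ((μt Set.univ)⁻¹ • μt) S +
            ENNReal.ofReal (4 * δ₀) :=
  multiplicative_update_privacy_general func hmeas η δ₀ hη hη' hδ₀ hstep T ℓs ℓs' hdiff μ₀ hμ₀fin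
    hμ₀ne t ht'
end

section
/- Let (Ω, 𝒜, m) be a σ-finite measure space and let f, g : Ω → (0,∞) be measurable functions such that f·dm and g·dm are nonzero finite measures; let μ and ν be their normalizations to probability measures. Let 0 < ε ≤ 1/10 and 0 ≤ δ ≤ 1, and suppose that for every measurable set S ⊆ Ω, μ(S) ≤ e^{ε/2}·ν(S) + δ and ν(S) ≤ e^{ε/2}·μ(S) + δ. Then the product measure μ ⊗ μ of the set {(x,y) ∈ Ω × Ω : g(x)·f(y) / (f(x)·g(y)) ∉ [e^{−2ε}, e^{2ε}]} is at most 12δ/ε. -/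
/-!
Normalising `f·dm` and `g·dm` makes `ν = u·μ` with `u = c·g/f` for a constant `c > 0`, and
the ratio in question is `u x / u y`. On `{u > e^ε}` we have `ν ≥ e^ε μ`, which together with
`ν ≤ e^{ε/2} μ + δ` forces `μ {u > e^ε} ≤ 2δ/ε`; symmetrically `μ {u < e^{-ε}} ≤ 4δ/ε`. If
both `u x` and `u y` lie in `[e^{-ε}, e^ε]` the ratio lies in `[e^{-2ε}, e^{2ε}]`, so a union
bound over the two coordinates gives `2 (2δ/ε + 4δ/ε) = 12δ/ε`.
-/

open MeasureTheory ENNReal Real Set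

def Indistinguishable {Ω : Type*} [MeasurableSpace Ω] (ε δ : ℝ) (μ ν : Measure Ω) : Prop :=
  ∀ S, MeasurableSet S →
    μ S ≤ ENNReal.ofReal (exp ε) * ν S + ENNReal.ofReal δ ∧
      ν S ≤ ENNReal.ofReal (exp ε) * μ S + ENNReal.ofReal δ

lemma half_le_exp_sub_exp_half {ε : ℝ} (hε : 0 ≤ ε) : ε / 2 ≤ exp ε - exp (ε / 2) := by
  have hsq : exp ε = exp (ε / 2) * exp (ε / 2) := by rw [← exp_add]; ring_nf
  nlinarith [add_one_le_exp (ε / 2)]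

lemma half_le_one_sub_exp_neg {t : ℝ} (ht : 0 ≤ t) (ht1 : t ≤ 1) : t / 2 ≤ 1 - exp (-t) := by
  have hmul : exp (-t) * exp t = 1 := by rw [← exp_add, neg_add_cancel, exp_zero]
  nlinarith [add_one_le_exp t, exp_pos (-t)]

lemma div_mem_Icc_exp {a b ε : ℝ} (ha : a ∈ Icc (exp (-ε)) (exp ε))
    (hb : b ∈ Icc (exp (-ε)) (exp ε)) : a / b ∈ Icc (exp (-2 * ε)) (exp (2 * ε)) := by
  constructor
  · calc exp (-2 * ε) = exp (-ε) / exp ε := by rw [← exp_sub]; ring_nf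
      _ ≤ a / b := div_le_div₀ ((exp_pos _).le.trans ha.1) ha.1 ((exp_pos _).trans_le hb.1) hb.2
  · calc a / b ≤ exp ε / exp (-ε) := div_le_div₀ (exp_pos _).le ha.2 (exp_pos _) hb.1
      _ = exp (2 * ε) := by rw [← exp_sub]; ring_nf

lemma ENNReal.le_ofReal_div_sub_of_mul_le_mul_add {x : ℝ≥0∞} (hx : x ≠ ∞) {a b d : ℝ}
    (hb : 0 ≤ b) (hba : b < a) (hd : 0 ≤ d)
    (h : ENNReal.ofReal a * x ≤ ENNReal.ofReal b * x + ENNReal.ofReal d) :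
    x ≤ ENNReal.ofReal (d / (a - b)) := by
  rw [← ofReal_toReal hx] at h ⊢
  rw [← ofReal_mul (hb.trans hba.le), ← ofReal_mul hb, ← ofReal_add (by positivity) hd,
    ofReal_le_ofReal_iff (by positivity)] at h
  exact ofReal_le_ofReal ((le_div_iff₀ (sub_pos.2 hba)).2 (by linarith))

lemma Measure.prod_self_fst_mem_or_snd_mem_le {Ω : Type*} [MeasurableSpace Ω] (μ : Measure Ω)
    [IsProbabilityMeasure μ] (s : Set Ω) :
    (μ.prod μ) {p | p.1 ∈ s ∨ p.2 ∈ s} ≤ 2 * μ s := by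
  have hunion : {p : Ω × Ω | p.1 ∈ s ∨ p.2 ∈ s} = s ×ˢ univ ∪ univ ×ˢ s := by ext; simp
  calc (μ.prod μ) {p | p.1 ∈ s ∨ p.2 ∈ s}
      ≤ (μ.prod μ) (s ×ˢ univ) + (μ.prod μ) (univ ×ˢ s) := hunion ▸ measure_union_le _ _
    _ = 2 * μ s := by simp only [Measure.prod_prod, measure_univ, mul_one, one_mul, two_mul]

lemma withDensity_ofReal_div {Ω : Type*} [MeasurableSpace Ω] (m : Measure Ω) {f g : Ω → ℝ}
    (hf : Measurable f) (hg : Measurable g) (hfpos : ∀ x, 0 < f x) :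
    (m.withDensity fun x => ENNReal.ofReal (f x)).withDensity
        (fun x => ENNReal.ofReal (g x / f x)) = m.withDensity fun x => ENNReal.ofReal (g x) := by
  have hmul : ((fun x => ENNReal.ofReal (f x)) * fun x => ENNReal.ofReal (g x / f x)) =
      fun x => ENNReal.ofReal (g x) := by
    ext x
    rw [Pi.mul_apply, ← ofReal_mul (hfpos x).le, mul_div_cancel₀ _ (hfpos x).ne']
  rw [← hmul]
  exact (withDensity_mul _ hf.ennreal_ofReal (hg.div hf).ennreal_ofReal).symm

section Density

variable {Ω : Type*} [MeasurableSpace Ω] {μ : Measure Ω} {u : Ω → ℝ} {s : Set Ω} {a : ℝ}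

lemma ofReal_mul_le_withDensity_ofReal (hs : MeasurableSet s) (h : ∀ x ∈ s, a ≤ u x) :
    ENNReal.ofReal a * μ s ≤ μ.withDensity (fun x => ENNReal.ofReal (u x)) s := by
  rw [withDensity_apply _ hs, ← setLIntegral_const]
  exact setLIntegral_mono' hs fun x hx => ofReal_le_ofReal (h x hx)

lemma withDensity_ofReal_le_ofReal_mul (hs : MeasurableSet s) (h : ∀ x ∈ s, u x ≤ a) :
    μ.withDensity (fun x => ENNReal.ofReal (u x)) s ≤ ENNReal.ofReal a * μ s := by
  rw [withDensity_apply _ hs, ← setLIntegral_const]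
  exact setLIntegral_mono' hs fun x hx => ofReal_le_ofReal (h x hx)

variable [IsFiniteMeasure μ] {ε δ : ℝ}

lemma measure_exp_lt_le (hu : Measurable u)
    (hind : Indistinguishable (ε / 2) δ μ (μ.withDensity fun x => ENNReal.ofReal (u x)))
    (hε : 0 < ε) (hδ : 0 ≤ δ) :
    μ {x | exp ε < u x} ≤ ENNReal.ofReal (2 * δ / ε) := by
  have hA : MeasurableSet {x | exp ε < u x} := measurableSet_lt measurable_const hu
  have h := (ofReal_mul_le_withDensity_ofReal hA fun x hx => le_of_lt hx).trans (hind _ hA).2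
  calc μ {x | exp ε < u x} ≤ ENNReal.ofReal (δ / (exp ε - exp (ε / 2))) :=
        ENNReal.le_ofReal_div_sub_of_mul_le_mul_add (measure_ne_top _ _) (exp_pos _).le
          (exp_lt_exp.2 (by linarith)) hδ h
    _ ≤ ENNReal.ofReal (2 * δ / ε) := by
        rw [show 2 * δ / ε = δ / (ε / 2) by ring]
        exact ofReal_le_ofReal (div_le_div_of_nonneg_left hδ (by positivity)
          (half_le_exp_sub_exp_half hε.le))

lemma measure_lt_exp_neg_le (hu : Measurable u)
    (hind : Indistinguishable (ε / 2) δ μ (μ.withDensity fun x => ENNReal.ofReal (u x)))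
    (hε : 0 < ε) (hε2 : ε ≤ 2) (hδ : 0 ≤ δ) :
    μ {x | u x < exp (-ε)} ≤ ENNReal.ofReal (4 * δ / ε) := by
  set B := {x | u x < exp (-ε)}
  have hB : MeasurableSet B := measurableSet_lt hu measurable_const
  have h : ENNReal.ofReal 1 * μ B ≤
      ENNReal.ofReal (exp (-(ε / 2))) * μ B + ENNReal.ofReal δ :=
    calc ENNReal.ofReal 1 * μ B = μ B := by rw [ofReal_one, one_mul]
      _ ≤ ENNReal.ofReal (exp (ε / 2)) * (ENNReal.ofReal (exp (-ε)) * μ B) +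
            ENNReal.ofReal δ :=
          (hind B hB).1.trans <| by
            gcongr
            exact withDensity_ofReal_le_ofReal_mul hB fun x hx => le_of_lt hx
      _ = ENNReal.ofReal (exp (-(ε / 2))) * μ B + ENNReal.ofReal δ := by
          rw [← mul_assoc, ← ofReal_mul (exp_pos _).le, ← exp_add]; ring_nf
  calc μ B ≤ ENNReal.ofReal (δ / (1 - exp (-(ε / 2)))) :=
        ENNReal.le_ofReal_div_sub_of_mul_le_mul_add (measure_ne_top _ _) (exp_pos _).le
          (exp_lt_one_iff.2 (by linarith)) hδ h
    _ ≤ ENNReal.ofReal (4 * δ / ε) := by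
        rw [show 4 * δ / ε = δ / (ε / 2 / 2) by ring]
        exact ofReal_le_ofReal (div_le_div_of_nonneg_left hδ (by positivity)
          (half_le_one_sub_exp_neg (by positivity) (by linarith)))

end Density

theorem prod_self_div_notMem_Icc_exp_le {Ω : Type*} [MeasurableSpace Ω] (μ : Measure Ω)
    [IsProbabilityMeasure μ] {u : Ω → ℝ} (hu : Measurable u) {ε δ : ℝ}
    (hind : Indistinguishable (ε / 2) δ μ (μ.withDensity fun x => ENNReal.ofReal (u x)))
    (hε : 0 < ε) (hε2 : ε ≤ 2) (hδ : 0 ≤ δ) :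
    (μ.prod μ) {p | u p.1 / u p.2 ∉ Icc (exp (-2 * ε)) (exp (2 * ε))} ≤
      ENNReal.ofReal (12 * δ / ε) := by
  set G := {x | u x ∈ Icc (exp (-ε)) (exp ε)}
  have hsub : {p : Ω × Ω | u p.1 / u p.2 ∉ Icc (exp (-2 * ε)) (exp (2 * ε))} ⊆
      {p | p.1 ∈ Gᶜ ∨ p.2 ∈ Gᶜ} := fun p hp => by
    by_contra h
    simp only [mem_ofPred_eq, mem_compl_iff, not_or, not_not] at h
    exact hp (div_mem_Icc_exp h.1 h.2)
  have hG : Gᶜ ⊆ {x | exp ε < u x} ∪ {x | u x < exp (-ε)} := fun x hx => by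
    simp only [G, mem_compl_iff, mem_ofPred_eq, mem_Icc, not_and_or, not_le] at hx
    exact hx.symm
  calc (μ.prod μ) {p | u p.1 / u p.2 ∉ Icc (exp (-2 * ε)) (exp (2 * ε))}
      ≤ 2 * μ Gᶜ := (measure_mono hsub).trans (Measure.prod_self_fst_mem_or_snd_mem_le μ _)
    _ ≤ 2 * (μ {x | exp ε < u x} + μ {x | u x < exp (-ε)}) := by
        gcongr; exact (measure_mono hG).trans (measure_union_le _ _)
    _ ≤ 2 * (ENNReal.ofReal (2 * δ / ε) + ENNReal.ofReal (4 * δ / ε)) := by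
        gcongr
        exacts [measure_exp_lt_le hu hind hε hδ, measure_lt_exp_neg_le hu hind hε hε2 hδ]
    _ = ENNReal.ofReal (12 * δ / ε) := by
        rw [← ofReal_add (by positivity) (by positivity), ← ofReal_ofNat 2,
          ← ofReal_mul zero_le_two]
        ring_nf

theorem correlated_sampling_ratio_general {Ω : Type*} [MeasurableSpace Ω] (m : Measure Ω)
    (f g : Ω → ℝ) (hf : Measurable f) (hg : Measurable g)
    (hfpos : ∀ x, 0 < f x)
    (hf_fin : IsFiniteMeasure (m.withDensity fun x => ENNReal.ofReal (f x)))
    (hf_ne : m.withDensity (fun x => ENNReal.ofReal (f x)) ≠ 0)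
    (hg_fin : IsFiniteMeasure (m.withDensity fun x => ENNReal.ofReal (g x)))
    (hg_ne : m.withDensity (fun x => ENNReal.ofReal (g x)) ≠ 0)
    (ε δ : ℝ) (hε : 0 < ε) (hε' : ε ≤ 1 / 10) (hδ : 0 ≤ δ) :
    let μ' := m.withDensity fun x => ENNReal.ofReal (f x)
    let ν' := m.withDensity fun x => ENNReal.ofReal (g x)
    let μ := (μ' Set.univ)⁻¹ • μ'
    let ν := (ν' Set.univ)⁻¹ • ν'
    (∀ S : Set Ω, MeasurableSet S →
        μ S ≤ ENNReal.ofReal (Real.exp (ε / 2)) * ν S + ENNReal.ofReal δ ∧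
          ν S ≤ ENNReal.ofReal (Real.exp (ε / 2)) * μ S + ENNReal.ofReal δ) →
      (μ.prod μ)
          {p : Ω × Ω |
            g p.1 * f p.2 / (f p.1 * g p.2) ∉
              Set.Icc (Real.exp (-2 * ε)) (Real.exp (2 * ε))} ≤
        ENNReal.ofReal (12 * δ / ε) := by
  intro μ' ν' μ ν hind
  have : NeZero μ' := ⟨hf_ne⟩
  have hZf : μ' univ ≠ ∞ := measure_ne_top _ _
  have hZf0 : μ' univ ≠ 0 := Measure.measure_univ_ne_zero.2 hf_ne
  have hZg0 : ν' univ ≠ 0 := Measure.measure_univ_ne_zero.2 hg_ne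
  have hc_ne_top : μ' univ / ν' univ ≠ ∞ := div_ne_top hZf hZg0
  set c := (μ' univ / ν' univ).toReal
  have hc : c ≠ 0 :=
    (toReal_pos (ENNReal.div_pos hZf0 (measure_ne_top _ _)).ne' hc_ne_top).ne'
  set u := fun x => c * (g x / f x)
  have hu : (fun x => ENNReal.ofReal (u x)) =
      ENNReal.ofReal c • fun x => ENNReal.ofReal (g x / f x) := by
    ext x
    exact ofReal_mul toReal_nonneg
  have hν : μ.withDensity (fun x => ENNReal.ofReal (u x)) = ν := by
    rw [withDensity_smul_measure, hu, withDensity_smul' _ _ ofReal_ne_top,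
      withDensity_ofReal_div m hf hg hfpos, smul_smul, ofReal_toReal hc_ne_top, div_eq_mul_inv,
      ← mul_assoc, ENNReal.inv_mul_cancel hZf0 hZf, one_mul]
  have hratio : ∀ p : Ω × Ω, g p.1 * f p.2 / (f p.1 * g p.2) = u p.1 / u p.2 := fun p => by
    rw [mul_div_mul_left _ _ hc, div_div_div_eq]
  simp only [hratio]
  exact prod_self_div_notMem_Icc_exp_le μ (measurable_const.mul (hg.div hf)) (hν.symm ▸ hind) hε
    (by linarith) hδ

/-- Concentration of the correlated-sampling ratio: if `μ` and `ν` are the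
normalizations of the nonzero finite measures `f·dm` and `g·dm` (with `f, g`
positive) and are `(ε/2, δ)`-indistinguishable, then two independent samples
`x, y ∼ μ` yield a ratio `g(x)f(y)/(f(x)g(y))` in `[e^{-2ε}, e^{2ε}]` except with
probability at most `12δ/ε`. -/
theorem correlated_sampling_ratio {Ω : Type*} [MeasurableSpace Ω] (m : Measure Ω)
    [SigmaFinite m] (f g : Ω → ℝ) (hf : Measurable f) (hg : Measurable g)
    (hfpos : ∀ x, 0 < f x) (hgpos : ∀ x, 0 < g x)
    (hf_fin : IsFiniteMeasure (m.withDensity fun x => ENNReal.ofReal (f x)))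
    (hf_ne : m.withDensity (fun x => ENNReal.ofReal (f x)) ≠ 0)
    (hg_fin : IsFiniteMeasure (m.withDensity fun x => ENNReal.ofReal (g x)))
    (hg_ne : m.withDensity (fun x => ENNReal.ofReal (g x)) ≠ 0)
    (ε δ : ℝ) (hε : 0 < ε) (hε' : ε ≤ 1 / 10) (hδ : 0 ≤ δ) (hδ' : δ ≤ 1) :
    let μ' := m.withDensity fun x => ENNReal.ofReal (f x)
    let ν' := m.withDensity fun x => ENNReal.ofReal (g x)
    let μ := (μ' Set.univ)⁻¹ • μ'
    let ν := (ν' Set.univ)⁻¹ • ν'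
    (∀ S : Set Ω, MeasurableSet S →
        μ S ≤ ENNReal.ofReal (Real.exp (ε / 2)) * ν S + ENNReal.ofReal δ ∧
          ν S ≤ ENNReal.ofReal (Real.exp (ε / 2)) * μ S + ENNReal.ofReal δ) →
      (μ.prod μ)
          {p : Ω × Ω |
            g p.1 * f p.2 / (f p.1 * g p.2) ∉
              Set.Icc (Real.exp (-2 * ε)) (Real.exp (2 * ε))} ≤
        ENNReal.ofReal (12 * δ / ε) :=
  correlated_sampling_ratio_general m f g hf hg hfpos hf_fin hf_ne hg_fin hg_ne ε δ hε hε' hδ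
end

section
/- Let T ≥ 1 and d ≥ 1 be integers, 0 ≤ ε ≤ 1/T, and 0 ≤ δ ≤ 1/2. Let A be a map assigning to each sequence D of T loss functions in {ℓ : {1,…,d} → {0,1}} a probability distribution A(D) over output sequences (z_1,…,z_T) ∈ {1,…,d}^T, and suppose A is (ε,δ)-differentially private: for any two input sequences differing in exactly one coordinate and every set O of output sequences, Pr[A(D) ∈ O] ≤ e^{ε}·Pr[A(D') ∈ O] + δ. Draw ℓ uniformly at random from {0,1}^{d} (each coordinate an independent Bernoulli(1/2)), let D_ℓ = (ℓ, ℓ, …, ℓ) be the constant sequence, and let (z_1,…,z_T) ∼ A(D_ℓ). Then E[ Σ_{t=1}^{T} ℓ(z_t) ] ≥ T·(1/2 − T·ε/2) − T²·d·δ/2, where the expectation is over both ℓ and the randomness of A. -/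
/-!
Fix a round `t` and let `p ℓ j` be the probability that `A(D_ℓ)` plays expert `j` at round `t`.
Against the complementary losses `ℓᶜ` the output of `A(D_ℓ)` pays one minus what it pays against
`ℓ`; reindexing by `ℓ ↦ ℓᶜ`, the average of this over `ℓ` is the average loss against `ℓ` of
`A(D_{ℓᶜ})`. The datasets `D_ℓ` and `D_{ℓᶜ}` differ in at most `T` entries, so group privacy gives
`p ℓᶜ j ≤ e^{Tε} (p ℓ j + Tδ)`. Hence the average round loss `L` satisfies
`1 - L ≤ e^{Tε} (L + Tdδ/2)`, and `(1 - x)(1 + eˣ) ≤ 2` turns this into `L ≥ (1 - Tε - Tdδ) / 2`.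
-/

open MeasureTheory Finset Function Real

theorem one_sub_mul_one_add_exp_le_two {x : ℝ} (hx : 0 ≤ x) : (1 - x) * (1 + exp x) ≤ 2 := by
  have h : (1 - x) * exp x ≤ 1 := by
    calc (1 - x) * exp x ≤ exp (-x) * exp x := by gcongr; linarith [add_one_le_exp (-x)]
      _ = 1 := by rw [← exp_add, neg_add_cancel, exp_zero]
  nlinarith

section GroupPrivacy

variable {ι X : Type*} [Fintype ι] [DecidableEq ι] [DecidableEq X]

theorem hammingDist_update_of_ne {x : ι → X} {i : ι} {v : X} (h : x i ≠ v) :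
    hammingDist x (update x i v) = 1 := by
  rw [hammingDist, card_eq_one]
  refine ⟨i, ?_⟩
  ext j
  rcases eq_or_ne j i with rfl | hj <;> simp [*]

theorem hammingDist_update_lt {x y : ι → X} {i : ι} (h : x i ≠ y i) :
    hammingDist (update x i (y i)) y < hammingDist x y := by
  refine card_lt_card ⟨fun j => ?_, fun hsub => ?_⟩
  · rcases eq_or_ne j i with rfl | hj <;> simp [*]
  · simpa using hsub (by simpa using h : i ∈ _)

theorem le_exp_mul_mul_add_of_hammingDist_le {f : (ι → X) → ℝ} {ε δ : ℝ} (hε : 0 ≤ ε)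
    (hδ : 0 ≤ δ) (hf₀ : ∀ D, 0 ≤ f D)
    (hf : ∀ D D', hammingDist D D' = 1 → f D ≤ exp ε * f D' + δ) {k : ℕ} :
    ∀ {D D'}, hammingDist D D' ≤ k → f D ≤ exp (k * ε) * (f D' + k * δ) := by
  induction k with
  | zero =>
    intro D D' h
    simp [hammingDist_eq_zero.mp (Nat.le_zero.mp h)]
  | succ k ih =>
    intro D D' h
    push_cast
    have hexp : 1 ≤ exp ((k + 1) * ε) := one_le_exp (by positivity)
    by_cases hDD' : D = D'
    · subst hDD'
      nlinarith [hf₀ D, (by positivity : 0 ≤ ((k : ℝ) + 1) * δ)]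
    obtain ⟨i, hi⟩ := Function.ne_iff.mp hDD'
    have hstep := hf D _ (hammingDist_update_of_ne hi)
    have hrest := ih (Nat.lt_succ_iff.mp ((hammingDist_update_lt hi).trans_le h))
    calc f D ≤ exp ε * (exp (k * ε) * (f D' + k * δ)) + δ := hstep.trans (by gcongr)
      _ = exp ((k + 1) * ε) * (f D' + k * δ) + δ := by
        rw [← mul_assoc, ← exp_add]; ring_nf
      _ ≤ exp ((k + 1) * ε) * (f D' + (k + 1) * δ) := by
        nlinarith [mul_le_mul_of_nonneg_right hexp hδ]

end GroupPrivacy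

section DifferentialPrivacy

variable {ι X Ω : Type*} [Fintype ι] [DecidableEq X] [MeasurableSpace Ω]

def IsDifferentiallyPrivate (A : (ι → X) → Measure Ω) (ε δ : ℝ) : Prop :=
  ∀ D D', hammingDist D D' = 1 → ∀ O, MeasurableSet O →
    A D O ≤ ENNReal.ofReal (exp ε) * A D' O + ENNReal.ofReal δ

variable {A : (ι → X) → Measure Ω} [∀ D, IsFiniteMeasure (A D)] {ε δ : ℝ} {O : Set Ω}

theorem IsDifferentiallyPrivate.measureReal_le (hA : IsDifferentiallyPrivate A ε δ) (hδ : 0 ≤ δ)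
    {D D' : ι → X} (h : hammingDist D D' = 1) (hO : MeasurableSet O) :
    (A D).real O ≤ exp ε * (A D').real O + δ := by
  have := ENNReal.toReal_mono (by finiteness) (hA D D' h O hO)
  rwa [ENNReal.toReal_add (by finiteness) (by finiteness), ENNReal.toReal_mul,
    ENNReal.toReal_ofReal (exp_pos ε).le, ENNReal.toReal_ofReal hδ] at this

theorem IsDifferentiallyPrivate.measureReal_le_of_hammingDist_le [DecidableEq ι]
    (hA : IsDifferentiallyPrivate A ε δ) (hε : 0 ≤ ε) (hδ : 0 ≤ δ) (hO : MeasurableSet O)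
    {k : ℕ} {D D' : ι → X} (h : hammingDist D D' ≤ k) :
    (A D).real O ≤ exp (k * ε) * ((A D').real O + k * δ) :=
  le_exp_mul_mul_add_of_hammingDist_le hε hδ (fun _ => measureReal_nonneg)
    (fun _ _ h => hA.measureReal_le hδ h hO) h

end DifferentialPrivacy

section Complement

variable {ι : Type*} [Fintype ι] [DecidableEq ι]

theorem sum_sum_ite_add_sum_sum_ite_compl (g : (ι → Bool) → ι → ℝ) :
    (∑ ℓ : ι → Bool, ∑ j, if ℓ j then g ℓ j else 0) +
        ∑ ℓ : ι → Bool, ∑ j, (if ℓ j then g ℓᶜ j else 0) =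
      ∑ ℓ : ι → Bool, ∑ j, g ℓ j := by
  have hreindex : ∑ ℓ : ι → Bool, ∑ j, (if ℓ j then g ℓᶜ j else 0) =
      ∑ ℓ : ι → Bool, ∑ j, if ℓᶜ j then g ℓ j else 0 :=
    Fintype.sum_bijective _ compl_involutive.bijective _ _ fun ℓ => by simp only [compl_compl]
  rw [hreindex, ← sum_add_distrib]
  refine sum_congr rfl fun ℓ _ => ?_
  rw [← sum_add_distrib]
  refine sum_congr rfl fun j _ => ?_
  cases h : ℓ j <;> simp [h]

theorem two_pow_card_mul_le_sum_sum_ite {p : (ι → Bool) → ι → ℝ} {x c : ℝ} (hx : 0 ≤ x)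
    (hc : 0 ≤ c) (hp : ∀ ℓ, ∑ j, p ℓ j = 1) (hcompl : ∀ ℓ j, p ℓᶜ j ≤ exp x * (p ℓ j + c)) :
    2 ^ Fintype.card ι * ((1 - x - Fintype.card ι * c) / 2) ≤
      ∑ ℓ : ι → Bool, ∑ j, if ℓ j then p ℓ j else 0 := by
  set W := ∑ ℓ : ι → Bool, ∑ j, if ℓ j then p ℓ j else 0
  set n : ℝ := (Fintype.card ι : ℝ)
  have hcard : ∑ _ℓ : ι → Bool, (1 : ℝ) = 2 ^ Fintype.card ι := by simp
  have hN : ∑ ℓ : ι → Bool, ∑ j, (if ℓ j then (1 : ℝ) else 0) = 2 ^ Fintype.card ι * n / 2 := by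
    have := sum_sum_ite_add_sum_sum_ite_compl fun (_ : ι → Bool) (_ : ι) => (1 : ℝ)
    simp only [sum_const, card_univ, nsmul_eq_mul, mul_one, Fintype.card_fun, Fintype.card_bool,
      Nat.cast_pow, Nat.cast_ofNat] at this
    linarith
  have hW : W + ∑ ℓ : ι → Bool, ∑ j, (if ℓ j then p ℓᶜ j else 0) = 2 ^ Fintype.card ι := by
    rw [sum_sum_ite_add_sum_sum_ite_compl, ← hcard]
    exact sum_congr rfl fun ℓ _ => hp ℓ
  have hflip : ∑ ℓ : ι → Bool, ∑ j, (if ℓ j then p ℓᶜ j else 0) ≤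
      exp x * W + exp x * c * ∑ ℓ : ι → Bool, ∑ j, (if ℓ j then (1 : ℝ) else 0) := by
    simp only [W, mul_sum, ← sum_add_distrib]
    refine sum_le_sum fun ℓ _ => sum_le_sum fun j _ => ?_
    split_ifs
    · linarith [hcompl ℓ j]
    · simp
  have hkey : 2 ^ Fintype.card ι ≤ (1 + exp x) * W + exp x * c * (2 ^ Fintype.card ι * n / 2) := by
    rw [hN] at hflip
    linarith
  have hexp := one_sub_mul_one_add_exp_le_two hx
  have hpow : (0 : ℝ) < 2 ^ Fintype.card ι := by positivity
  have hncp : 0 ≤ n * c * 2 ^ Fintype.card ι := by positivity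
  refine le_of_mul_le_mul_left ?_ (by positivity : 0 < 1 + exp x)
  nlinarith [mul_le_mul_of_nonneg_left hexp hpow.le, mul_nonneg hncp (exp_pos x).le]

end Complement

theorem integral_comp_eq_sum_measureReal_preimage {Ω ι : Type*} [MeasurableSpace Ω] [Fintype ι]
    [MeasurableSpace ι] [MeasurableSingletonClass ι] {μ : Measure Ω} [IsFiniteMeasure μ]
    {f : Ω → ι} (hf : Measurable f) (g : ι → ℝ) :
    ∫ ω, g (f ω) ∂μ = ∑ j, μ.real (f ⁻¹' {j}) * g j := by
  rw [← integral_map hf.aemeasurable (by fun_prop), integral_fintype (hf := .of_finite)]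
  simp [map_measureReal_apply hf (measurableSet_singleton _)]

theorem dp_experts_epoch_lower_bound_general (T d : ℕ) (ε δ : ℝ) (hε : 0 ≤ ε) (hδ : 0 ≤ δ)
    (A : (Fin T → (Fin d → Bool)) → Measure (Fin T → Fin d))
    (hprob : ∀ D, IsProbabilityMeasure (A D))
    (hDP : ∀ D D' : Fin T → (Fin d → Bool),
      (Finset.univ.filter fun i => D i ≠ D' i).card = 1 →
      ∀ O : Set (Fin T → Fin d), MeasurableSet O →
        A D O ≤ ENNReal.ofReal (Real.exp ε) * A D' O + ENNReal.ofReal δ) :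
    (∑ ℓ : Fin d → Bool,
        ∫ z : Fin T → Fin d,
          (∑ t : Fin T, if ℓ (z t) then (1 : ℝ) else 0) ∂(A fun _ => ℓ)) / 2 ^ d ≥
      T * (1 / 2 - T * ε / 2) - T ^ 2 * d * δ / 2 := by
  have hA : IsDifferentiallyPrivate A ε δ := hDP
  set p : Fin T → (Fin d → Bool) → Fin d → ℝ :=
    fun t ℓ j => (A fun _ => ℓ).real ((fun z => z t) ⁻¹' {j})
  have hround (t : Fin T) :
      2 ^ d * ((1 - T * ε - d * (T * δ)) / 2) ≤ ∑ ℓ, ∑ j, if ℓ j then p t ℓ j else 0 := by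
    have hp (ℓ : Fin d → Bool) : ∑ j, p t ℓ j = 1 := by
      rw [sum_measureReal_preimage_singleton _ (fun _ _ => (Set.toFinite _).measurableSet)
        fun _ _ => measure_ne_top _ _, coe_univ, Set.preimage_univ, probReal_univ]
    have hcompl (ℓ : Fin d → Bool) (j : Fin d) : p t ℓᶜ j ≤ exp (T * ε) * (p t ℓ j + T * δ) :=
      hA.measureReal_le_of_hammingDist_le hε hδ (Set.toFinite _).measurableSet
        (hammingDist_le_card_fintype.trans (Fintype.card_fin T).le)
    simpa using two_pow_card_mul_le_sum_sum_ite (by positivity) (by positivity) hp hcompl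
  have hloss : ∑ ℓ : Fin d → Bool, ∫ z : Fin T → Fin d,
      (∑ t : Fin T, if ℓ (z t) then (1 : ℝ) else 0) ∂(A fun _ => ℓ) =
      ∑ t, ∑ ℓ : Fin d → Bool, ∑ j, if ℓ j then p t ℓ j else 0 := by
    rw [sum_comm]
    refine sum_congr rfl fun ℓ _ => ?_
    rw [integral_finsetSum _ fun _ _ => .of_finite]
    refine sum_congr rfl fun t _ => ?_
    exact (integral_comp_eq_sum_measureReal_preimage (f := fun z : Fin T → Fin d => z t)
      (measurable_pi_apply t) fun j => if ℓ j then (1 : ℝ) else 0).trans (by simp [p])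
  rw [ge_iff_le, le_div_iff₀ (by positivity), hloss]
  calc _ = ∑ _t : Fin T, (2 : ℝ) ^ d * ((1 - T * ε - d * (T * δ)) / 2) := by simp; ring
    _ ≤ _ := sum_le_sum fun t _ => hround t

/-- Single-epoch utility lower bound for DP experts algorithms: if `A` is an
`(ε, δ)`-differentially private algorithm mapping a sequence of `T` binary loss
vectors over `d` experts to a distribution over output sequences in `[d]^T`, then
on the dataset consisting of `T` copies of a uniformly random loss vector
`ℓ ∈ {0,1}^d`, the expected cumulative loss is at least
`T (1/2 - Tε/2) - T² d δ / 2`. -/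
theorem dp_experts_epoch_lower_bound (T d : ℕ) (hT : 1 ≤ T) (hd : 1 ≤ d)
    (ε δ : ℝ) (hε : 0 ≤ ε) (hε' : ε ≤ 1 / T) (hδ : 0 ≤ δ) (hδ' : δ ≤ 1 / 2)
    (A : (Fin T → (Fin d → Bool)) → Measure (Fin T → Fin d))
    (hprob : ∀ D, IsProbabilityMeasure (A D))
    (hDP : ∀ D D' : Fin T → (Fin d → Bool),
      (Finset.univ.filter fun i => D i ≠ D' i).card = 1 →
      ∀ O : Set (Fin T → Fin d), MeasurableSet O →
        A D O ≤ ENNReal.ofReal (Real.exp ε) * A D' O + ENNReal.ofReal δ) :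
    (∑ ℓ : Fin d → Bool,
        ∫ z : Fin T → Fin d,
          (∑ t : Fin T, if ℓ (z t) then (1 : ℝ) else 0) ∂(A fun _ => ℓ)) / 2 ^ d ≥
      T * (1 / 2 - T * ε / 2) - T ^ 2 * d * δ / 2 :=
  dp_experts_epoch_lower_bound_general T d ε δ hε hδ A hprob hDP
end

section
/- Let d ≥ 1 be an integer and a, b ≥ 0 reals. Let P and Q be probability distributions on {1,…,d} such that P(z) ≥ e^{−a}·Q(z) − b for every z ∈ {1,…,d}. Then for every function f : {1,…,d} → [0,1], Σ_{z=1}^{d} f(z)·P(z) + Σ_{z=1}^{d} (1 − f(z))·Q(z) ≥ 1 − d·b − a. -/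
/-- Two-distribution inequality for paired instances: if `P` and `Q` are
probability distributions on `{1, …, d}` with `P z ≥ e^{-a} Q z - b` pointwise,
then for every `f : {1, …, d} → [0,1]`,
`∑ f(z) P(z) + ∑ (1 - f(z)) Q(z) ≥ 1 - d b - a`. -/
theorem paired_losses_lower_bound (d : ℕ) (hd : 1 ≤ d) (a b : ℝ)
    (ha : 0 ≤ a) (hb : 0 ≤ b)
    (P Q : Fin d → ℝ) (hP0 : ∀ z, 0 ≤ P z) (hQ0 : ∀ z, 0 ≤ Q z)
    (hP1 : ∑ z, P z = 1) (hQ1 : ∑ z, Q z = 1)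
    (hPQ : ∀ z, Real.exp (-a) * Q z - b ≤ P z)
    (f : Fin d → ℝ) (hf0 : ∀ z, 0 ≤ f z) (hf1 : ∀ z, f z ≤ 1) :
    1 - d * b - a ≤ (∑ z, f z * P z) + ∑ z, (1 - f z) * Q z := by
  have hexp1 : Real.exp (-a) ≤ 1 := Real.exp_le_one_iff.mpr (by linarith)
  have h1 : ∑ z, (Real.exp (-a) * (f z * Q z) - b) ≤ ∑ z, f z * P z := by
    apply Finset.sum_le_sum
    intro z _
    have := hPQ z
    have hq := hQ0 z
    have hf := hf0 z
    have hf' := hf1 z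
    nlinarith [mul_le_mul_of_nonneg_left this hf]
  have h2 : ∀ z, Real.exp (-a) * ((1 - f z) * Q z) ≤ (1 - f z) * Q z := by
    intro z
    have : 0 ≤ (1 - f z) * Q z := mul_nonneg (by linarith [hf1 z]) (hQ0 z)
    nlinarith
  have h3 : ∑ z, Real.exp (-a) * ((1 - f z) * Q z) ≤ ∑ z, (1 - f z) * Q z :=
    Finset.sum_le_sum fun z _ => h2 z
  have key : ∑ z, (f z * Q z) + ∑ z, ((1 - f z) * Q z) = 1 := by
    rw [← Finset.sum_add_distrib,
      Finset.sum_congr rfl (fun z _ => by ring : ∀ z ∈ Finset.univ, f z * Q z + (1 - f z) * Q z = Q z), hQ1]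
  have hsum1 : ∑ z, (Real.exp (-a) * (f z * Q z) - b)
      = Real.exp (-a) * ∑ z, (f z * Q z) - d * b := by
    rw [Finset.sum_sub_distrib, ← Finset.mul_sum, Finset.sum_const, Finset.card_univ,
      Fintype.card_fin, nsmul_eq_mul]
  have hsum2 : ∑ z, Real.exp (-a) * ((1 - f z) * Q z)
      = Real.exp (-a) * ∑ z, ((1 - f z) * Q z) := by
    rw [Finset.mul_sum]
  have hea : 1 - a ≤ Real.exp (-a) := by
    have := Real.add_one_le_exp (-a); linarith
  nlinarith [h1, h3, hsum1, hsum2, key]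
end

section
/- Let ι be a nonempty finite index set and let (μ_i)_{i ∈ ι} be a family of probability measures on a standard Borel space Ω. Then there exists a probability measure Γ on the product space Ω^{ι} (with the product σ-algebra) such that for every i ∈ ι the i-th coordinate marginal of Γ equals μ_i, and for every pair i, j ∈ ι, Γ({ω ∈ Ω^{ι} : ω(i) ≠ ω(j)}) ≤ 2·d_TV(μ_i, μ_j) / (1 + d_TV(μ_i, μ_j)), where d_TV(μ, ν) = sup over measurable S of |μ(S) − ν(S)| denotes the total variation distance. -/
open MeasureTheory

/-- The total variation distance `sup_S |μ(S) - ν(S)|` between two measures. -/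
noncomputable def tvDist {Ω : Type*} [MeasurableSpace Ω] (μ ν : Measure Ω) : ℝ :=
  ⨆ S : {S : Set Ω // MeasurableSet S}, |(μ S.1).toReal - (ν S.1).toReal|

/-!
Let `σ = ∑ i, μ i`, `n = #ι`, and draw `(z, u)` from `(σ / n) ⊗ Unif[0, 1]`; index `i` accepts the
draw when `u < dμ_i/dσ (z)`. As `dμ_i/dσ ≤ 1`, conditioned on acceptance by `i` the point `z` has
law `μ i`. Rejection sampling couples all indices: condition a draw on being accepted by some index,
give its point to every index accepting it, and couple the remaining indices recursively by fresh
draws. Each round removes an index, so the recursion is finite, and by induction coordinate `i` has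
law `μ i`. Indices `i` and `j` agree as soon as the first draw accepted by either is accepted by
both, which has probability `β / (2 - β)` where `β = ∫ min (dμ_i/dσ) (dμ_j/dσ) dσ = 1 - d_TV`;
and `1 - β / (2 - β) = 2 d_TV / (1 + d_TV)`.
-/

open Set ENNReal

lemma ENNReal.div_eq_inv_add_mul_add_mul_div {x m d : ℝ≥0∞} (hm0 : m ≠ 0) (hm : m ≠ ⊤)
    (hd : d ≠ ⊤) : x / m = (m + d)⁻¹ * (x + d * (x / m)) := by
  have : x + d * (x / m) = (m + d) * (x / m) := by rw [add_mul, ENNReal.mul_div_cancel hm0 hm]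
  rw [this, ← mul_assoc, ENNReal.inv_mul_cancel (by simp [hm0]) (by finiteness), one_mul]

lemma ENNReal.toReal_one_sub_div_two_sub {b : ℝ≥0∞} (hb : b ≤ 1) :
    (1 - b / (2 - b)).toReal = 2 * (1 - b.toReal) / (1 + (1 - b.toReal)) := by
  have hb' : b.toReal ≤ 1 := ENNReal.toReal_le_of_le_ofReal zero_le_one (by simpa using hb)
  have h2b : 1 ≤ 2 - b := ENNReal.le_sub_of_add_le_left (ne_top_of_le_ne_top one_ne_top hb) (by
    calc b + 1 ≤ 1 + 1 := by gcongr
      _ = 2 := one_add_one_eq_two)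
  have hdiv : b / (2 - b) ≤ 1 := ENNReal.div_le_of_le_mul (by simpa using hb.trans h2b)
  rw [ENNReal.toReal_sub_of_le hdiv one_ne_top, ENNReal.toReal_div,
    ENNReal.toReal_sub_of_le (hb.trans one_le_two) ofNat_ne_top, toReal_one, toReal_ofNat]
  have : 2 - b.toReal ≠ 0 := by linarith
  rw [show 1 + (1 - b.toReal) = 2 - b.toReal by ring]
  field_simp
  ring

namespace RejectionCoupling

variable {W Ω ι : Type*}

open Classical in
noncomputable def acceptors (A : ι → Set W) (S : Finset ι) (w : W) : Finset ι :=
  {i ∈ S | w ∈ A i}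

lemma card_sdiff_le_of_nonempty [DecidableEq ι] {S T : Finset ι} {k : ℕ} (hS : S.card ≤ k + 1)
    (hT : T ∈ S.powerset) (hT' : T.Nonempty) : (S \ T).card ≤ k := by
  rw [Finset.card_sdiff_of_subset (Finset.mem_powerset.1 hT)]
  have := hT'.card_pos
  omega

section Acceptors

variable {A : ι → Set W} {S : Finset ι} {i j : ι} {w : W}

lemma mem_acceptors : i ∈ acceptors A S w ↔ i ∈ S ∧ w ∈ A i := by
  classical
  simp [acceptors]

lemma acceptors_subset : acceptors A S w ⊆ S := fun _ hi => (mem_acceptors.1 hi).1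

lemma acceptors_nonempty_iff : (acceptors A S w).Nonempty ↔ w ∈ ⋃ i ∈ S, A i := by
  simp [Finset.Nonempty, mem_acceptors]

lemma ofPred_acceptors_nonempty_and_mem (hi : i ∈ S) :
    {w | (acceptors A S w).Nonempty ∧ i ∈ acceptors A S w} = A i := by
  ext w
  simp only [mem_ofPred_eq, mem_acceptors, hi, true_and]
  exact and_iff_right_of_imp fun h => ⟨i, mem_acceptors.2 ⟨hi, h⟩⟩

lemma ofPred_acceptors_nonempty_and_notMem (hi : i ∈ S) :
    {w | (acceptors A S w).Nonempty ∧ i ∉ acceptors A S w} = (⋃ l ∈ S, A l) \ A i := by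
  ext w
  simp [mem_acceptors, acceptors_nonempty_iff, hi]

lemma ofPred_acceptors_nonempty_and_mem_and_mem (hi : i ∈ S) (hj : j ∈ S) :
    {w | (acceptors A S w).Nonempty ∧ (i ∈ acceptors A S w ∧ j ∈ acceptors A S w)} =
      A i ∩ A j := by
  ext w
  simp only [mem_ofPred_eq, mem_inter_iff, mem_acceptors, hi, hj, true_and]
  exact and_iff_right_of_imp fun h => ⟨i, mem_acceptors.2 ⟨hi, h.1⟩⟩

lemma ofPred_acceptors_nonempty_and_notMem_and_notMem (hi : i ∈ S) (hj : j ∈ S) :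
    {w | (acceptors A S w).Nonempty ∧ (i ∉ acceptors A S w ∧ j ∉ acceptors A S w)} =
      (⋃ l ∈ S, A l) \ (A i ∪ A j) := by
  ext w
  simp [mem_acceptors, acceptors_nonempty_iff, hi, hj]

variable [MeasurableSpace W]

lemma measurable_acceptors (hA : ∀ i, MeasurableSet (A i)) (S : Finset ι) :
    Measurable (acceptors A S) := by
  refine measurable_finset_iff.2 fun i => ?_
  simp only [mem_acceptors]
  exact measurable_const.and (measurableSet_setOfPred.1 (hA i))

lemma sum_measure_acceptors_preimage [Countable ι] (ν : Measure W)
    (hA : ∀ i, MeasurableSet (A i)) (S : Finset ι) (P : Finset ι → Prop) [DecidablePred P] :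
    ∑ T ∈ S.powerset with P T, ν (acceptors A S ⁻¹' {T}) = ν {w | P (acceptors A S w)} := by
  rw [sum_measure_preimage_singleton _
    fun _ _ => measurable_acceptors hA S (measurableSet_singleton _)]
  congr 1
  ext w
  simp [acceptors_subset]

lemma measure_biUnion_ne_zero {κ : Measure W} (hpos : ∀ i, κ (A i) ≠ 0) (hi : i ∈ S) :
    κ (⋃ j ∈ S, A j) ≠ 0 :=
  ne_bot_of_le_ne_bot (hpos i) (measure_mono (Finset.subset_set_biUnion_of_mem hi))

end Acceptors

variable [DecidableEq ι]

def paste (X : W → Ω) (T : Finset ι) (p : W × (ι → Ω)) : ι → Ω :=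
  fun i => if i ∈ T then X p.1 else p.2 i

section Paste

variable {X : W → Ω} {T : Finset ι} {i j : ι}

lemma paste_preimage_eval_of_mem (hi : i ∈ T) (s : Set Ω) :
    paste X T ⁻¹' ((fun ω => ω i) ⁻¹' s) = (X ⁻¹' s) ×ˢ univ := by
  ext; simp [paste, hi]

lemma paste_preimage_eval_of_notMem (hi : i ∉ T) (s : Set Ω) :
    paste X T ⁻¹' ((fun ω => ω i) ⁻¹' s) = univ ×ˢ ((fun ω => ω i) ⁻¹' s) := by
  ext; simp [paste, hi]

lemma paste_preimage_eq_of_mem (hi : i ∈ T) (hj : j ∈ T) :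
    paste X T ⁻¹' {ω | ω i = ω j} = univ ×ˢ univ := by
  ext; simp [paste, hi, hj]

lemma paste_preimage_eq_of_notMem (hi : i ∉ T) (hj : j ∉ T) :
    paste X T ⁻¹' {ω | ω i = ω j} = univ ×ˢ {ω | ω i = ω j} := by
  ext; simp [paste, hi, hj]

end Paste

variable [MeasurableSpace W] [MeasurableSpace Ω]

lemma measurable_paste {X : W → Ω} (hX : Measurable X) (T : Finset ι) : Measurable (paste X T) := by
  refine measurable_pi_lambda _ fun i => ?_
  by_cases hi : i ∈ T <;> simp only [paste, hi, if_true, if_false]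
  · exact hX.comp measurable_fst
  · exact (measurable_pi_apply i).comp measurable_snd

noncomputable def roundMeasure (κ : Measure W) (X : W → Ω) (A : ι → Set W)
    (Γ : Finset ι → Measure (ι → Ω)) (S T : Finset ι) : Measure (ι → Ω) :=
  ((κ.restrict (acceptors A S ⁻¹' {T})).prod (Γ (S \ T))).map (paste X T)

/-- Each round removes at least one index, so fuel `k ≥ #S` suffices; with less fuel the value
is junk. -/
noncomputable def coupling (κ : Measure W) (X : W → Ω) (A : ι → Set W) :
    ℕ → Finset ι → Measure (ι → Ω)
  | 0, _ => κ.map fun w _ => X w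
  | k + 1, S =>
    if S.Nonempty then
      (κ (⋃ i ∈ S, A i))⁻¹ • ∑ T ∈ S.powerset with T.Nonempty,
        roundMeasure κ X A (coupling κ X A k) S T
    else κ.map fun w _ => X w

variable {κ : Measure W} {X : W → Ω} {A : ι → Set W} {Γ : Finset ι → Measure (ι → Ω)}
  {S T : Finset ι} {i j : ι}

section RoundMeasure

variable (hX : Measurable X)
include hX

lemma roundMeasure_apply {E : Set (ι → Ω)} (hE : MeasurableSet E) :
    roundMeasure κ X A Γ S T E =
      (κ.restrict (acceptors A S ⁻¹' {T})).prod (Γ (S \ T)) (paste X T ⁻¹' E) :=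
  Measure.map_apply (measurable_paste hX T) hE

lemma roundMeasure_eval_of_notMem [SFinite (Γ (S \ T))] (hi : i ∉ T) {s : Set Ω}
    (hs : MeasurableSet s) :
    roundMeasure κ X A Γ S T ((fun ω => ω i) ⁻¹' s) =
      κ (acceptors A S ⁻¹' {T}) * (Γ (S \ T)).map (fun ω => ω i) s := by
  rw [roundMeasure_apply hX (measurable_pi_apply i hs), paste_preimage_eval_of_notMem hi,
    Measure.prod_prod, Measure.restrict_apply_univ, Measure.map_apply (measurable_pi_apply i) hs]

lemma roundMeasure_eq_of_notMem [SFinite (Γ (S \ T))] [MeasurableEq Ω] (hi : i ∉ T)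
    (hj : j ∉ T) :
    roundMeasure κ X A Γ S T {ω | ω i = ω j} =
      κ (acceptors A S ⁻¹' {T}) * Γ (S \ T) {ω | ω i = ω j} := by
  rw [roundMeasure_apply hX (measurableSet_eq_fun (measurable_pi_apply i) (measurable_pi_apply j)),
    paste_preimage_eq_of_notMem hi hj, Measure.prod_prod, Measure.restrict_apply_univ]

variable [IsProbabilityMeasure (Γ (S \ T))]

lemma roundMeasure_univ : roundMeasure κ X A Γ S T univ = κ (acceptors A S ⁻¹' {T}) := by
  rw [roundMeasure_apply hX MeasurableSet.univ, preimage_univ, ← univ_prod_univ,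
    Measure.prod_prod, Measure.restrict_apply_univ, measure_univ, mul_one]

lemma roundMeasure_eval_of_mem (hi : i ∈ T) {s : Set Ω} (hs : MeasurableSet s) :
    roundMeasure κ X A Γ S T ((fun ω => ω i) ⁻¹' s) =
      κ.restrict (X ⁻¹' s) (acceptors A S ⁻¹' {T}) := by
  rw [roundMeasure_apply hX (measurable_pi_apply i hs), paste_preimage_eval_of_mem hi,
    Measure.prod_prod, measure_univ, mul_one, Measure.restrict_apply (hX hs),
    Measure.restrict_apply' (hX hs), inter_comm]

lemma roundMeasure_eq_of_mem [MeasurableEq Ω] (hi : i ∈ T) (hj : j ∈ T) :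
    roundMeasure κ X A Γ S T {ω | ω i = ω j} = κ (acceptors A S ⁻¹' {T}) := by
  rw [roundMeasure_apply hX (measurableSet_eq_fun (measurable_pi_apply i) (measurable_pi_apply j)),
    paste_preimage_eq_of_mem hi hj, Measure.prod_prod, Measure.restrict_apply_univ, measure_univ,
    mul_one]

end RoundMeasure

lemma coupling_succ_apply (k : ℕ) (hS : S.Nonempty) (E : Set (ι → Ω)) :
    coupling κ X A (k + 1) S E = (κ (⋃ i ∈ S, A i))⁻¹ *
      ∑ T ∈ S.powerset with T.Nonempty, roundMeasure κ X A (coupling κ X A k) S T E := by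
  simp only [coupling, if_pos hS, Measure.smul_apply, Measure.finsetSum_apply, smul_eq_mul]

variable [Countable ι] [IsProbabilityMeasure κ] (hX : Measurable X)
  (hA : ∀ i, MeasurableSet (A i)) (hpos : ∀ i, κ (A i) ≠ 0)
include hX hA hpos

theorem isProbabilityMeasure_coupling (k : ℕ) (S : Finset ι) :
    IsProbabilityMeasure (coupling κ X A k S) := by
  have hbase : IsProbabilityMeasure (κ.map fun w (_ : ι) => X w) :=
    Measure.isProbabilityMeasure_map (measurable_pi_lambda _ fun _ => hX).aemeasurable
  induction k generalizing S with
  | zero => exact hbase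
  | succ k ih =>
    by_cases hS : S.Nonempty
    · obtain ⟨i, hi⟩ := hS
      constructor
      rw [coupling_succ_apply k ⟨i, hi⟩, Finset.sum_congr rfl fun T _ => roundMeasure_univ hX,
        sum_measure_acceptors_preimage κ hA]
      simp_rw [acceptors_nonempty_iff, ofPred_mem_eq]
      exact ENNReal.inv_mul_cancel (measure_biUnion_ne_zero hpos hi) (measure_ne_top _ _)
    · simpa [coupling, hS] using hbase

theorem map_eval_coupling {ν : Measure Ω}
    (hlaw : ∀ s, MeasurableSet s → κ (A i ∩ X ⁻¹' s) = κ (A i) * ν s) (k : ℕ) (S : Finset ι)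
    (hk : S.card ≤ k) (hi : i ∈ S) : (coupling κ X A k S).map (fun ω => ω i) = ν := by
  induction k generalizing S with
  | zero => simp_all [Finset.card_eq_zero]
  | succ k ih =>
    ext s hs
    have := isProbabilityMeasure_coupling hX hA hpos k
    have hin : ∑ T ∈ S.powerset with T.Nonempty ∧ i ∈ T,
        roundMeasure κ X A (coupling κ X A k) S T ((fun ω => ω i) ⁻¹' s) = κ (A i ∩ X ⁻¹' s) := by
      rw [Finset.sum_congr rfl fun T hT =>
          roundMeasure_eval_of_mem hX (Finset.mem_filter.1 hT).2.2 hs,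
        sum_measure_acceptors_preimage _ hA, ofPred_acceptors_nonempty_and_mem hi,
        Measure.restrict_apply (hA i)]
    have hout : ∑ T ∈ S.powerset with T.Nonempty ∧ i ∉ T,
        roundMeasure κ X A (coupling κ X A k) S T ((fun ω => ω i) ⁻¹' s) =
          κ ((⋃ l ∈ S, A l) \ A i) * ν s := by
      calc _ = ∑ T ∈ S.powerset with T.Nonempty ∧ i ∉ T, κ (acceptors A S ⁻¹' {T}) * ν s := by
            refine Finset.sum_congr rfl fun T hT => ?_
            obtain ⟨hTS, hT, hiT⟩ := Finset.mem_filter.1 hT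
            rw [roundMeasure_eval_of_notMem hX hiT hs,
              ih _ (card_sdiff_le_of_nonempty hk hTS hT) (Finset.mem_sdiff.2 ⟨hi, hiT⟩)]
        _ = _ := by
            rw [← Finset.sum_mul, sum_measure_acceptors_preimage _ hA,
              ofPred_acceptors_nonempty_and_notMem hi]
    rw [Measure.map_apply (measurable_pi_apply i) hs, coupling_succ_apply k ⟨i, hi⟩,
      ← Finset.sum_filter_add_sum_filter_not _ (fun T => i ∈ T), Finset.filter_filter,
      Finset.filter_filter, hin, hout, hlaw s hs, ← add_mul,
      measure_add_sdiff (hA i).nullMeasurableSet,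
      union_eq_self_of_subset_left (Finset.subset_set_biUnion_of_mem hi), ← mul_assoc,
      ENNReal.inv_mul_cancel (measure_biUnion_ne_zero hpos hi) (measure_ne_top _ _), one_mul]

theorem div_le_coupling_eval_eq [MeasurableEq Ω] (k : ℕ) (S : Finset ι) (hk : S.card ≤ k)
    (hi : i ∈ S) (hj : j ∈ S) :
    κ (A i ∩ A j) / κ (A i ∪ A j) ≤ coupling κ X A k S {ω | ω i = ω j} := by
  induction k generalizing S with
  | zero => simp_all [Finset.card_eq_zero]
  | succ k ih =>
    set r := κ (A i ∩ A j) / κ (A i ∪ A j)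
    have := isProbabilityMeasure_coupling hX hA hpos k
    have hboth : ∑ T ∈ S.powerset with T.Nonempty ∧ (i ∈ T ∧ j ∈ T),
        roundMeasure κ X A (coupling κ X A k) S T {ω | ω i = ω j} = κ (A i ∩ A j) := by
      rw [Finset.sum_congr rfl fun T hT => roundMeasure_eq_of_mem hX
          (Finset.mem_filter.1 hT).2.2.1 (Finset.mem_filter.1 hT).2.2.2,
        sum_measure_acceptors_preimage _ hA, ofPred_acceptors_nonempty_and_mem_and_mem hi hj]
    have hneither : κ ((⋃ l ∈ S, A l) \ (A i ∪ A j)) * r ≤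
        ∑ T ∈ S.powerset with T.Nonempty ∧ (i ∉ T ∧ j ∉ T),
          roundMeasure κ X A (coupling κ X A k) S T {ω | ω i = ω j} := by
      calc _ = ∑ T ∈ S.powerset with T.Nonempty ∧ (i ∉ T ∧ j ∉ T),
            κ (acceptors A S ⁻¹' {T}) * r := by
            rw [← Finset.sum_mul, sum_measure_acceptors_preimage _ hA,
              ofPred_acceptors_nonempty_and_notMem_and_notMem hi hj]
        _ ≤ _ := by
            refine Finset.sum_le_sum fun T hT => ?_
            obtain ⟨hTS, hT, hiT, hjT⟩ := Finset.mem_filter.1 hT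
            rw [roundMeasure_eq_of_notMem hX hiT hjT]
            exact mul_le_mul_right (ih _ (card_sdiff_le_of_nonempty hk hTS hT)
              (Finset.mem_sdiff.2 ⟨hi, hiT⟩) (Finset.mem_sdiff.2 ⟨hj, hjT⟩)) _
    have hsplit : κ (⋃ l ∈ S, A l) = κ (A i ∪ A j) + κ ((⋃ l ∈ S, A l) \ (A i ∪ A j)) := by
      rw [measure_add_sdiff ((hA i).union (hA j)).nullMeasurableSet, union_eq_self_of_subset_left
        (union_subset (Finset.subset_set_biUnion_of_mem hi) (Finset.subset_set_biUnion_of_mem hj))]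
    rw [coupling_succ_apply k ⟨i, hi⟩,
      ← Finset.sum_filter_add_sum_filter_not _ (fun T => i ∈ T ∧ j ∈ T), Finset.filter_filter,
      Finset.filter_filter, hboth, hsplit]
    calc r = (κ (A i ∪ A j) + κ ((⋃ l ∈ S, A l) \ (A i ∪ A j)))⁻¹ *
          (κ (A i ∩ A j) + κ ((⋃ l ∈ S, A l) \ (A i ∪ A j)) * r) :=
          ENNReal.div_eq_inv_add_mul_add_mul_div
            (ne_bot_of_le_ne_bot (hpos i) (measure_mono subset_union_left))
            (measure_ne_top _ _) (measure_ne_top _ _)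
      _ ≤ _ := by
          gcongr
          exact hneither.trans (Finset.sum_le_sum_of_subset
            (Finset.monotone_filter_right _ fun T _ h => ⟨h.1, fun h' => h.2.1 h'.1⟩))

theorem coupling_eval_ne_le [MeasurableEq Ω] (k : ℕ) (S : Finset ι) (hk : S.card ≤ k)
    (hi : i ∈ S) (hj : j ∈ S) :
    coupling κ X A k S {ω | ω i ≠ ω j} ≤ 1 - κ (A i ∩ A j) / κ (A i ∪ A j) := by
  have := isProbabilityMeasure_coupling hX hA hpos k S
  rw [← compl_ofPred, prob_compl_eq_one_sub
    (measurableSet_eq_fun (measurable_pi_apply i) (measurable_pi_apply j))]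
  exact tsub_le_tsub_left (div_le_coupling_eval_eq hX hA hpos k S hk hi hj) 1

end RejectionCoupling

section TotalVariation

variable {Ω : Type*} [MeasurableSpace Ω] {σ μ ν : Measure Ω} [SigmaFinite σ]

lemma lintegral_min_rnDeriv_le [SigmaFinite μ] [SigmaFinite ν] (hμ : μ ≪ σ) (hν : ν ≪ σ)
    {s : Set Ω} (hs : MeasurableSet s) :
    ∫⁻ z, min (μ.rnDeriv σ z) (ν.rnDeriv σ z) ∂σ ≤ ν s + μ sᶜ := by
  rw [← lintegral_add_compl _ hs, ← Measure.setLIntegral_rnDeriv hν,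
    ← Measure.setLIntegral_rnDeriv hμ]
  gcongr <;> simp

lemma lintegral_min_rnDeriv_eq [SigmaFinite μ] [SigmaFinite ν] (hμ : μ ≪ σ) (hν : ν ≪ σ) :
    ∫⁻ z, min (μ.rnDeriv σ z) (ν.rnDeriv σ z) ∂σ =
      ν {z | ν.rnDeriv σ z < μ.rnDeriv σ z} + μ {z | ν.rnDeriv σ z < μ.rnDeriv σ z}ᶜ := by
  have hs : MeasurableSet {z | ν.rnDeriv σ z < μ.rnDeriv σ z} :=
    measurableSet_lt (Measure.measurable_rnDeriv _ _) (Measure.measurable_rnDeriv _ _)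
  rw [← lintegral_add_compl _ hs, ← Measure.setLIntegral_rnDeriv hν,
    ← Measure.setLIntegral_rnDeriv hμ]
  congr 1 <;> refine setLIntegral_congr_fun (by measurability) fun z hz => ?_
  · exact min_eq_right (le_of_lt hz)
  · exact min_eq_left (not_lt.1 hz)

lemma lintegral_min_rnDeriv_le_one [SigmaFinite μ] [IsProbabilityMeasure ν] (hμ : μ ≪ σ)
    (hν : ν ≪ σ) : ∫⁻ z, min (μ.rnDeriv σ z) (ν.rnDeriv σ z) ∂σ ≤ 1 := by
  simpa using lintegral_min_rnDeriv_le hμ hν MeasurableSet.univ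

lemma sub_le_one_sub_lintegral_min_rnDeriv [IsProbabilityMeasure μ] [IsFiniteMeasure ν]
    (hμ : μ ≪ σ) (hν : ν ≪ σ) {s : Set Ω} (hs : MeasurableSet s) :
    μ.real s - ν.real s ≤ 1 - (∫⁻ z, min (μ.rnDeriv σ z) (ν.rnDeriv σ z) ∂σ).toReal := by
  have := ENNReal.toReal_mono (by finiteness) (lintegral_min_rnDeriv_le hμ hν hs)
  rw [ENNReal.toReal_add (by finiteness) (by finiteness)] at this
  simp only [← measureReal_def, probReal_compl_eq_one_sub hs] at this
  linarith

theorem tvDist_eq_one_sub_lintegral_min_rnDeriv [IsProbabilityMeasure μ] [IsProbabilityMeasure ν]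
    (hμ : μ ≪ σ) (hν : ν ≪ σ) :
    tvDist μ ν = 1 - (∫⁻ z, min (μ.rnDeriv σ z) (ν.rnDeriv σ z) ∂σ).toReal := by
  have hbound : ∀ S : {S : Set Ω // MeasurableSet S},
      |μ.real S - ν.real S| ≤ 1 - (∫⁻ z, min (μ.rnDeriv σ z) (ν.rnDeriv σ z) ∂σ).toReal :=
    fun S => abs_sub_le_iff.2 ⟨sub_le_one_sub_lintegral_min_rnDeriv hμ hν S.2,
      by simpa only [min_comm] using sub_le_one_sub_lintegral_min_rnDeriv hν hμ S.2⟩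
  refine le_antisymm (ciSup_le hbound) ?_
  have hs : MeasurableSet {z | ν.rnDeriv σ z < μ.rnDeriv σ z} :=
    measurableSet_lt (Measure.measurable_rnDeriv _ _) (Measure.measurable_rnDeriv _ _)
  refine le_ciSup_of_le ⟨_, forall_mem_range.2 hbound⟩ ⟨_, hs⟩ (le_of_eq_of_le ?_ (le_abs_self _))
  rw [lintegral_min_rnDeriv_eq hμ hν, ENNReal.toReal_add (by finiteness) (by finiteness)]
  simp only [← measureReal_def, probReal_compl_eq_one_sub hs]
  ring

end TotalVariation

namespace RejectionCoupling

lemma restrict_Icc_setOfPred_ofReal_lt (a : ℝ≥0∞) :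
    volume.restrict (Icc (0 : ℝ) 1) {u | ENNReal.ofReal u < a} = min a 1 := by
  rcases le_or_gt a 1 with ha | ha
  · have ha' : a ≠ ⊤ := ne_top_of_le_ne_top one_ne_top ha
    have : {u | ENNReal.ofReal u < a} ∩ Icc (0 : ℝ) 1 = Ico 0 a.toReal := by
      ext u
      simp only [mem_inter_iff, mem_ofPred_eq, mem_Icc, mem_Ico]
      constructor
      · rintro ⟨hu, h0, -⟩
        exact ⟨h0, (ENNReal.ofReal_lt_iff_lt_toReal h0 ha').1 hu⟩
      · rintro ⟨h0, hu⟩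
        refine ⟨(ENNReal.ofReal_lt_iff_lt_toReal h0 ha').2 hu, h0, hu.le.trans ?_⟩
        exact ENNReal.toReal_le_of_le_ofReal zero_le_one (by simpa using ha)
    rw [Measure.restrict_apply' measurableSet_Icc, this, Real.volume_Ico, sub_zero,
      ENNReal.ofReal_toReal ha', min_eq_left ha]
  · rw [Measure.restrict_apply_superset, Real.volume_Icc, min_eq_right ha.le]
    · simp
    · exact fun u hu => (ENNReal.ofReal_le_one.2 hu.2).trans_lt ha

lemma prod_restrict_Icc_setOfPred_ofReal_lt {Ω : Type*} [MeasurableSpace Ω] (ρ : Measure Ω)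
    [SFinite ρ] {φ : Ω → ℝ≥0∞} (hφ : Measurable φ) :
    ρ.prod (volume.restrict (Icc (0 : ℝ) 1)) {w | ENNReal.ofReal w.2 < φ w.1} =
      ∫⁻ z, min (φ z) 1 ∂ρ := by
  rw [Measure.prod_apply (measurableSet_lt (by fun_prop) (by fun_prop))]
  exact lintegral_congr fun z => restrict_Icc_setOfPred_ofReal_lt (φ z)

variable {ι Ω : Type*} [Fintype ι] [MeasurableSpace Ω]

noncomputable def proposal (μ : ι → Measure Ω) : Measure (Ω × ℝ) :=
  ((Fintype.card ι : ℝ≥0∞)⁻¹ • ∑ i, μ i).prod (volume.restrict (Icc 0 1))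

def acceptRegion (μ : ι → Measure Ω) (i : ι) : Set (Ω × ℝ) :=
  {w | ENNReal.ofReal w.2 < (μ i).rnDeriv (∑ j, μ j) w.1}

variable (μ : ι → Measure Ω)

lemma measurableSet_acceptRegion (i : ι) : MeasurableSet (acceptRegion μ i) :=
  measurableSet_lt (by fun_prop) ((Measure.measurable_rnDeriv _ _).comp measurable_fst)

lemma le_sum_measure (i : ι) : μ i ≤ ∑ j, μ j :=
  Finset.single_le_sum (f := μ) (fun j _ => Measure.zero_le (μ j)) (Finset.mem_univ i)

lemma absolutelyContinuous_sum_measure (i : ι) : μ i ≪ ∑ j, μ j :=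
  Measure.absolutelyContinuous_of_le (le_sum_measure μ i)

section Finite

variable [∀ i, IsFiniteMeasure (μ i)]

lemma rnDeriv_sum_le_one (i : ι) : (μ i).rnDeriv (∑ j, μ j) ≤ᵐ[∑ j, μ j] 1 :=
  Measure.rnDeriv_le_one_of_le (le_sum_measure μ i)

lemma proposal_setOfPred_ofReal_lt {φ : Ω → ℝ≥0∞} (hφ : Measurable φ) (hφ1 : φ ≤ᵐ[∑ j, μ j] 1) :
    proposal μ {w | ENNReal.ofReal w.2 < φ w.1} =
      (Fintype.card ι : ℝ≥0∞)⁻¹ * ∫⁻ z, φ z ∂(∑ j, μ j) := by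
  rw [proposal, prod_restrict_Icc_setOfPred_ofReal_lt _ hφ, lintegral_smul_measure, smul_eq_mul]
  congr 1
  exact lintegral_congr_ae (hφ1.mono fun z hz => min_eq_left hz)

lemma proposal_acceptRegion_inter_fst (i : ι) {s : Set Ω} (hs : MeasurableSet s) :
    proposal μ (acceptRegion μ i ∩ Prod.fst ⁻¹' s) = (Fintype.card ι : ℝ≥0∞)⁻¹ * μ i s := by
  have : acceptRegion μ i ∩ Prod.fst ⁻¹' s =
      {w | ENNReal.ofReal w.2 < s.indicator ((μ i).rnDeriv (∑ j, μ j)) w.1} := by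
    ext ⟨z, u⟩
    by_cases hz : z ∈ s <;> simp [acceptRegion, hz]
  rw [this, proposal_setOfPred_ofReal_lt μ ((Measure.measurable_rnDeriv _ _).indicator hs),
    lintegral_indicator hs, Measure.setLIntegral_rnDeriv]
  · exact absolutelyContinuous_sum_measure μ i
  · filter_upwards [rnDeriv_sum_le_one μ i] with z hz
    exact (indicator_le_self s _ z).trans hz

lemma proposal_acceptRegion_inter (i j : ι) :
    proposal μ (acceptRegion μ i ∩ acceptRegion μ j) = (Fintype.card ι : ℝ≥0∞)⁻¹ *
      ∫⁻ z, min ((μ i).rnDeriv (∑ l, μ l) z) ((μ j).rnDeriv (∑ l, μ l) z) ∂(∑ l, μ l) := by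
  have : acceptRegion μ i ∩ acceptRegion μ j = {w | ENNReal.ofReal w.2 <
      min ((μ i).rnDeriv (∑ l, μ l) w.1) ((μ j).rnDeriv (∑ l, μ l) w.1)} := by
    ext; simp [acceptRegion]
  rw [this, proposal_setOfPred_ofReal_lt μ (φ := fun z => min ((μ i).rnDeriv (∑ l, μ l) z)
    ((μ j).rnDeriv (∑ l, μ l) z)) (by fun_prop)]
  filter_upwards [rnDeriv_sum_le_one μ i] with z hz
  exact min_le_left _ _ |>.trans hz

end Finite

variable [∀ i, IsProbabilityMeasure (μ i)]

instance isProbabilityMeasure_proposal [Nonempty ι] : IsProbabilityMeasure (proposal μ) := by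
  have : IsProbabilityMeasure ((Fintype.card ι : ℝ≥0∞)⁻¹ • ∑ i, μ i) := ⟨by
    simp [ENNReal.inv_mul_cancel]⟩
  have : IsProbabilityMeasure (volume.restrict (Icc (0 : ℝ) 1)) := ⟨by simp⟩
  unfold proposal
  infer_instance

lemma proposal_acceptRegion (i : ι) :
    proposal μ (acceptRegion μ i) = (Fintype.card ι : ℝ≥0∞)⁻¹ := by
  simpa using proposal_acceptRegion_inter_fst μ i MeasurableSet.univ

lemma proposal_acceptRegion_inter_fst_eq_mul (i : ι) (s : Set Ω) (hs : MeasurableSet s) :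
    proposal μ (acceptRegion μ i ∩ Prod.fst ⁻¹' s) = proposal μ (acceptRegion μ i) * μ i s := by
  rw [proposal_acceptRegion_inter_fst μ i hs, proposal_acceptRegion]

lemma proposal_inter_div_union [Nonempty ι] (i j : ι) :
    proposal μ (acceptRegion μ i ∩ acceptRegion μ j) /
        proposal μ (acceptRegion μ i ∪ acceptRegion μ j) =
      (∫⁻ z, min ((μ i).rnDeriv (∑ l, μ l) z) ((μ j).rnDeriv (∑ l, μ l) z) ∂(∑ l, μ l)) /
        (2 - ∫⁻ z, min ((μ i).rnDeriv (∑ l, μ l) z) ((μ j).rnDeriv (∑ l, μ l) z) ∂(∑ l, μ l)) := by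
  have hc0 : (Fintype.card ι : ℝ≥0∞)⁻¹ ≠ 0 := by simp
  have hctop : (Fintype.card ι : ℝ≥0∞)⁻¹ ≠ ⊤ := by simp
  have hsum := measure_union_add_inter (μ := proposal μ) (acceptRegion μ i)
    (measurableSet_acceptRegion μ j)
  rw [proposal_acceptRegion, proposal_acceptRegion] at hsum
  rw [ENNReal.eq_sub_of_add_eq (measure_ne_top _ _) hsum, proposal_acceptRegion_inter, ← mul_two,
    ← ENNReal.mul_sub fun _ _ => hctop, ENNReal.mul_div_mul_left _ _ hc0 hctop]

end RejectionCoupling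

open RejectionCoupling

/-- Pairwise near-optimal coupling: for a finite nonempty family of probability
measures `(μ i)` on a standard Borel space, there is a single probability measure
`Γ` on the product space whose `i`-th marginal is `μ i` for every `i`, and such
that for every pair `i, j` the coordinates disagree with probability at most
`2 d_TV(μ i, μ j) / (1 + d_TV(μ i, μ j))`. -/
theorem pairwise_optimal_coupling {ι Ω : Type*} [Fintype ι] [Nonempty ι]
    [MeasurableSpace Ω] [StandardBorelSpace Ω]
    (μ : ι → Measure Ω) (hprob : ∀ i, IsProbabilityMeasure (μ i)) :
    ∃ Γ : Measure (ι → Ω), IsProbabilityMeasure Γ ∧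
      (∀ i : ι, Γ.map (fun ω => ω i) = μ i) ∧
      ∀ i j : ι,
        (Γ {ω : ι → Ω | ω i ≠ ω j}).toReal ≤
          2 * tvDist (μ i) (μ j) / (1 + tvDist (μ i) (μ j)) := by
  classical
  have hpos : ∀ i, proposal μ (acceptRegion μ i) ≠ 0 := by simp [proposal_acceptRegion]
  have hA := measurableSet_acceptRegion μ
  have hk : (Finset.univ : Finset ι).card ≤ Fintype.card ι := le_rfl
  have hac := absolutelyContinuous_sum_measure μ
  refine ⟨coupling (proposal μ) Prod.fst (acceptRegion μ) (Fintype.card ι) Finset.univ,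
    isProbabilityMeasure_coupling measurable_fst hA hpos _ _, fun i =>
      map_eval_coupling measurable_fst hA hpos (proposal_acceptRegion_inter_fst_eq_mul μ i) _ _ hk
        (Finset.mem_univ i), fun i j => ?_⟩
  rw [tvDist_eq_one_sub_lintegral_min_rnDeriv (hac i) (hac j),
    ← ENNReal.toReal_one_sub_div_two_sub (lintegral_min_rnDeriv_le_one (hac i) (hac j)),
    ← proposal_inter_div_union μ i j]
  exact ENNReal.toReal_mono (by finiteness)
    (coupling_eval_ne_le measurable_fst hA hpos _ _ hk (Finset.mem_univ i) (Finset.mem_univ j))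
end
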